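/- arXiv:2105.05140 — 8 statements merged into one kernel-verified Lean document; each statement's English description precedes it below -/
import Mathlib

section
/- The sets D_T, indexed by paths T (equivalently permutations σ ∈ S_d), defined by D_T = {x ∈ ℝ^d : 0 ≤ x_{σ(d)} <_{σ,d} x_{σ(d-1)} <_{σ,d-1} ... <_{σ,2} x_{σ(1)} < 1}, form a partition of the semi-open unit cube [0,1)^d: they are pairwise disjoint and their union equals [0,1)^d. -/
/-- The half-open simplex `D_T` of the Coxeter–Freudenthal–Kuhn triangulation
associated to a permutation `σ` (indices shifted so that `σ i` for `i : Fin d`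
corresponds to the paper's `σ(i+1)`):
`D_T = {x : 0 ≤ x_{σ(d)} <_{σ,d} x_{σ(d-1)} <_{σ,d-1} ... <_{σ,2} x_{σ(1)} < 1}`,
where `<_{σ,i}` is `<` if `σ(i-1) < σ(i)` and `≤` if `σ(i-1) > σ(i)`. -/
def Dset (d : ℕ) (σ : Equiv.Perm (Fin d)) : Set (Fin d → ℝ) :=
  {x | (∀ i : Fin d, 0 ≤ x (σ i) ∧ x (σ i) < 1) ∧
       ∀ i j : Fin d, (i : ℕ) + 1 = (j : ℕ) →
         (if σ i < σ j then x (σ j) < x (σ i) else x (σ j) ≤ x (σ i))}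

/-- The lexicographic key used to identify the permutation associated to a point:
`k ↦ (-x k, dual k)`. -/
private def keyf {d : ℕ} (x : Fin d → ℝ) : Fin d → Lex (ℝ × (Fin d)ᵒᵈ) :=
  fun k => toLex (-x k, OrderDual.toDual k)

private lemma keyf_inj {d : ℕ} (x : Fin d → ℝ) : Function.Injective (keyf x) := by
  intro a b h
  have := congrArg (fun p => OrderDual.ofDual (ofLex p).2) h
  simpa [keyf] using this

private lemma keyf_lt {d : ℕ} (x : Fin d → ℝ) {a b : Fin d} :
    keyf x a < keyf x b ↔ x b < x a ∨ (x a = x b ∧ b < a) := by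
  show toLex (-x a, OrderDual.toDual a) < toLex (-x b, OrderDual.toDual b) ↔ _
  rw [Prod.Lex.lt_iff]
  dsimp only [ofLex_toLex]
  rw [neg_lt_neg_iff, neg_inj, OrderDual.toDual_lt_toDual]

/-- The chain condition in `Dset` is equivalent to strict monotonicity of the key
along `σ`. -/
private lemma chain_iff {n : ℕ} (x : Fin (n + 1) → ℝ) (σ : Equiv.Perm (Fin (n + 1))) :
    (∀ i j : Fin (n + 1), (i : ℕ) + 1 = (j : ℕ) →
        (if σ i < σ j then x (σ j) < x (σ i) else x (σ j) ≤ x (σ i))) ↔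
      StrictMono (keyf x ∘ σ) := by
  constructor
  · intro h
    rw [Fin.strictMono_iff_lt_succ]
    intro i
    have hij : ((i.castSucc : Fin (n+1)) : ℕ) + 1 = (i.succ : Fin (n+1)) := by simp
    have hne : σ i.castSucc ≠ σ i.succ := by
      intro hc
      have := σ.injective hc
      have : (i.castSucc : ℕ) = (i.succ : ℕ) := by rw [this]
      omega
    have hh := h i.castSucc i.succ hij
    show keyf x (σ i.castSucc) < keyf x (σ i.succ)
    rw [keyf_lt]
    by_cases hlt : σ i.castSucc < σ i.succ
    · rw [if_pos hlt] at hh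
      exact Or.inl hh
    · rw [if_neg hlt] at hh
      rcases hh.eq_or_lt with he | hl
      · exact Or.inr ⟨he.symm, lt_of_le_of_ne (not_lt.1 hlt) hne.symm⟩
      · exact Or.inl hl
  · intro h i j hij
    have hlt : i < j := by rw [Fin.lt_def]; omega
    have hk := h hlt
    rw [Function.comp_apply, Function.comp_apply, keyf_lt] at hk
    by_cases hc : σ i < σ j
    · rw [if_pos hc]
      rcases hk with h1 | ⟨h1, h2⟩
      · exact h1
      · exact absurd hc (asymm h2).elim
    · rw [if_neg hc]
      rcases hk with h1 | ⟨h1, h2⟩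
      · exact h1.le
      · exact h1.ge

/-- If `x ∈ Dset (n+1) σ` then `σ` is the sorting permutation of the key of `x`. -/
private lemma eq_sort_of_mem {n : ℕ} {x : Fin (n + 1) → ℝ} {σ : Equiv.Perm (Fin (n + 1))}
    (hx : x ∈ Dset (n + 1) σ) : σ = Tuple.sort (keyf x) := by
  have hsm : StrictMono (keyf x ∘ σ) := (chain_iff x σ).1 hx.2
  rw [Tuple.eq_sort_iff]
  refine ⟨hsm.monotone, fun i j hij he => ?_⟩
  exact absurd (σ.injective (keyf_inj x he)) hij.ne

/-- The sets `D_T`, indexed by the permutations `σ ∈ S_d`, are pairwise disjoint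
and their union is the semi-open unit cube `[0,1)^d`. -/
theorem stmt3 (d : ℕ) (hd : 2 ≤ d) :
    (∀ σ τ : Equiv.Perm (Fin d), σ ≠ τ → Disjoint (Dset d σ) (Dset d τ)) ∧
    (⋃ σ : Equiv.Perm (Fin d), Dset d σ) =
      {x : Fin d → ℝ | ∀ i : Fin d, x i ∈ Set.Ico (0 : ℝ) 1} := by
  obtain ⟨n, rfl⟩ : ∃ n, d = n + 1 := ⟨d - 1, by omega⟩
  constructor
  · intro σ τ hne
    rw [Set.disjoint_left]
    intro x hxσ hxτ
    exact hne ((eq_sort_of_mem hxσ).trans (eq_sort_of_mem hxτ).symm)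
  · ext x
    simp only [Set.mem_iUnion, Set.mem_setOf_eq, Set.mem_Ico]
    constructor
    · rintro ⟨σ, hx⟩ i
      have := hx.1 (σ.symm i)
      simpa using this
    · intro hx
      refine ⟨Tuple.sort (keyf x), fun i => hx _, ?_⟩
      rw [chain_iff]
      have hmono : Monotone (keyf x ∘ Tuple.sort (keyf x)) :=
        ((Tuple.eq_sort_iff).1 rfl).1
      exact hmono.strictMono_of_injective ((keyf_inj x).comp (Equiv.injective _))
end

section
/- The family of scaled tent functions {χ_r^α : α ∈ rℤ^d} forms a partition of unity: Σ_{α ∈ rℤ^d} χ_r^α(x) = 1 for every x ∈ ℝ^d. -/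
/-- The affine functions `H_T^i` of the CFK simplex with permutation `σ`. -/
noncomputable def Hfun (d : ℕ) (σ : Equiv.Perm (Fin d)) (i : Fin (d + 1))
    (x : Fin d → ℝ) : ℝ :=
  (if h : (i : ℕ) = 0 then 1
    else x (σ ⟨(i : ℕ) - 1, by have := i.isLt; omega⟩)) -
  (if h : (i : ℕ) < d then x (σ ⟨(i : ℕ), h⟩) else 0)

/-- The `i`-th vertex `T(i) = Σ_{j ≤ i} e_{σ(j)}` of the CFK path of `σ`. -/
def vert (d : ℕ) (σ : Equiv.Perm (Fin d)) (i : Fin (d + 1)) : Fin d → ℝ :=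
  fun k => if ((σ.symm k : ℕ) < (i : ℕ)) then 1 else 0

/-- The primal tent function
`χ_1^0(x) = Σ_T Σ_{i=0}^d 1_{D_T}(x + T(i)) H_T^i(x + T(i))`. -/
noncomputable def tent (d : ℕ) (x : Fin d → ℝ) : ℝ :=
  ∑ σ : Equiv.Perm (Fin d), ∑ i : Fin (d + 1),
    Set.indicator (Dset d σ) (fun _ => (1 : ℝ)) (x + vert d σ i) *
      Hfun d σ i (x + vert d σ i)

/-- The scaled tent function `χ_r^α(x) = χ_1^0((x - α)/r)`. -/
noncomputable def tentR (d : ℕ) (r : ℝ) (α : Fin d → ℝ) (x : Fin d → ℝ) : ℝ :=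
  tent d (fun k => (x k - α k) / r)

/-! ### Auxiliary material -/

/-- The injection `k ↦ (z k, k)` into the lexicographic product. -/
noncomputable def injf (d : ℕ) (z : Fin d → ℝ) : Fin d → Lex (ℝ × Fin d) :=
  fun k => toLex (z k, k)

lemma injf_injective (d : ℕ) (z : Fin d → ℝ) : Function.Injective (injf d z) := by
  intro a b h
  have := congrArg (fun p => (ofLex p).2) h
  simpa [injf] using this

lemma strictAnti_of_succ {d : ℕ} {L : Type*} [Preorder L] {g : Fin d → L}
    (h : ∀ i j : Fin d, (i : ℕ) + 1 = (j : ℕ) → g j < g i) : StrictAnti g := by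
  have key : ∀ n : ℕ, ∀ a b : Fin d, (a : ℕ) + n + 1 = (b : ℕ) → g b < g a := by
    intro n
    induction n with
    | zero => intro a b hb; exact h a b (by omega)
    | succ n ih =>
      intro a b hb
      have hm : (a : ℕ) + 1 < d := by have := b.isLt; omega
      exact (ih ⟨(a : ℕ) + 1, hm⟩ b (by simp; omega)).trans (h a ⟨(a : ℕ) + 1, hm⟩ (by simp))
  intro a b hab
  have : (a : ℕ) < (b : ℕ) := hab
  exact key ((b : ℕ) - (a : ℕ) - 1) a b (by omega)

lemma mem_Dset_iff (d : ℕ) (z : Fin d → ℝ) (σ : Equiv.Perm (Fin d)) :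
    z ∈ Dset d σ ↔ (∀ k, 0 ≤ z k ∧ z k < 1) ∧ StrictAnti (injf d z ∘ σ) := by
  constructor
  · rintro ⟨h1, h2⟩
    refine ⟨fun k => by simpa using h1 (σ.symm k), strictAnti_of_succ ?_⟩
    intro i j hij
    have hne : σ i ≠ σ j := fun hc => by
      have := σ.injective hc; omega
    have := h2 i j hij
    simp only [Function.comp_apply, injf, Prod.Lex.lt_iff]
    by_cases hlt : σ i < σ j
    · rw [if_pos hlt] at this
      exact Or.inl this
    · rw [if_neg hlt] at this
      rcases lt_or_eq_of_le this with h | h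
      · exact Or.inl h
      · exact Or.inr ⟨h, lt_of_le_of_ne (le_of_not_gt hlt) (Ne.symm hne)⟩
  · rintro ⟨h1, h2⟩
    refine ⟨fun i => h1 (σ i), ?_⟩
    intro i j hij
    have hlt : injf d z (σ j) < injf d z (σ i) := h2 (show i < j from by
      exact (Fin.lt_def).2 (by omega))
    rw [injf, injf, Prod.Lex.lt_iff] at hlt
    by_cases hc : σ i < σ j
    · rw [if_pos hc]
      rcases hlt with h | ⟨_, h⟩
      · exact h
      · exact absurd hc (asymm h)
    · rw [if_neg hc]
      rcases hlt with h | ⟨h, _⟩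
      · exact le_of_lt h
      · exact le_of_eq h

lemma exists_unique_sigma (d : ℕ) (z : Fin d → ℝ) (hz : ∀ k, 0 ≤ z k ∧ z k < 1) :
    ∃! σ : Equiv.Perm (Fin d), z ∈ Dset d σ := by
  classical
  set f := injf d z with hf
  have hfinj : Function.Injective f := injf_injective d z
  -- existence
  set τ := Tuple.sort f with hτ
  have hmono : Monotone (f ∘ τ) := Tuple.monotone_sort f
  have hsm : StrictMono (f ∘ τ) :=
    hmono.strictMono_of_injective (hfinj.comp τ.injective)
  refine ⟨(Fin.revPerm).trans τ, ?_, ?_⟩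
  · show z ∈ Dset d (Equiv.trans Fin.revPerm τ)
    rw [mem_Dset_iff]
    refine ⟨hz, ?_⟩
    intro a b hab
    exact hsm (Fin.rev_lt_rev.mpr hab)
  · intro σ hσ
    have h1 := (mem_Dset_iff d z _).1 hσ |>.2
    have h2 := (mem_Dset_iff d z ((Fin.revPerm).trans τ)).1 (by
      rw [mem_Dset_iff]
      exact ⟨hz, fun a b hab => hsm (Fin.rev_lt_rev.mpr hab)⟩) |>.2
    have hr1 : Set.range (f ∘ σ) = Set.range f := σ.surjective.range_comp f
    have hr2 : Set.range (f ∘ ((Fin.revPerm).trans τ)) = Set.range f :=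
      ((Fin.revPerm).trans τ).surjective.range_comp f
    have heq : f ∘ σ = f ∘ ((Fin.revPerm).trans τ) :=
      (StrictAnti.range_inj h1 h2).1 (hr1.trans hr2.symm)
    ext i
    exact congrArg Fin.val (hfinj (congrFun heq i))

lemma Hsum (d : ℕ) (hd : 1 ≤ d) (σ : Equiv.Perm (Fin d)) (z : Fin d → ℝ) :
    ∑ i : Fin (d + 1), Hfun d σ i z = 1 := by
  classical
  set g : ℕ → ℝ := fun n =>
    if n = 0 then 1 else if h : n - 1 < d then z (σ ⟨n - 1, h⟩) else 0 with hg
  have hterm : ∀ i : Fin (d + 1), Hfun d σ i z = g i - g (i + 1) := by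
    rintro ⟨iv, hiv⟩
    simp only [Hfun, hg, Nat.add_sub_cancel, Nat.succ_ne_zero, if_false]
    split_ifs <;> first | rfl | omega | ring
  calc ∑ i : Fin (d + 1), Hfun d σ i z
      = ∑ i : Fin (d + 1), (g (i : ℕ) - g ((i : ℕ) + 1)) :=
        Finset.sum_congr rfl fun i _ => hterm i
    _ = ∑ n ∈ Finset.range (d + 1), (g n - g (n + 1)) :=
        Fin.sum_univ_eq_sum_range (fun n => g n - g (n + 1)) (d + 1)
    _ = g 0 - g (d + 1) := Finset.sum_range_sub' g (d + 1)
    _ = 1 := by simp [hg]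

/-- The family of scaled tent functions `{χ_r^α : α ∈ rℤ^d}` forms a partition
of unity: `Σ_{α ∈ rℤ^d} χ_r^α(x) = 1` for every `x ∈ ℝ^d`. -/
theorem stmt8 (d : ℕ) (hd : 2 ≤ d) (r : ℝ) (hr : 0 < r) :
    ∀ x : Fin d → ℝ,
      ∑' α : Fin d → ℤ, tentR d r (fun k => r * (α k : ℝ)) x = 1 := by
  classical
  intro x
  set y : Fin d → ℝ := fun k => x k / r with hy
  have htr : ∀ α : Fin d → ℤ, tentR d r (fun k => r * (α k : ℝ)) x
      = tent d (fun k => y k - (α k : ℝ)) := by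
    intro α
    unfold tentR
    congr 1
    funext k
    rw [hy]
    field_simp
  set z : Fin d → ℝ := fun k => Int.fract (y k) with hz
  set β : Fin d → ℤ := fun k => ⌊y k⌋ with hβ
  have hzb : ∀ k, 0 ≤ z k ∧ z k < 1 :=
    fun k => ⟨Int.fract_nonneg _, Int.fract_lt_one _⟩
  obtain ⟨σ₀, hσ₀, huniq⟩ := exists_unique_sigma d z hzb
  set A : Fin (d + 1) → (Fin d → ℤ) :=
    fun i k => β k + if ((σ₀.symm k : ℕ) < (i : ℕ)) then 1 else 0 with hA
  -- the point equals z
  have hyA : ∀ i : Fin (d + 1),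
      ((fun k => y k - ((A i k : ℤ) : ℝ)) + vert d σ₀ i) = z := by
    intro i
    funext k
    simp only [Pi.add_apply, vert, hA, hz, hβ]
    push_cast
    split_ifs <;> [skip; skip] <;>
      · rw [← Int.self_sub_floor]
        ring
  -- injectivity of A
  have hAne : ∀ i j : Fin (d + 1), (i : ℕ) < (j : ℕ) → A i ≠ A j := by
    intro i j hij h
    have hi : (i : ℕ) < d := by have := j.isLt; omega
    have hk := congrFun h (σ₀ ⟨(i : ℕ), hi⟩)
    simp only [hA, Equiv.symm_apply_apply] at hk
    rw [if_neg (by simp), if_pos (by simpa using hij)] at hk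
    omega
  have hAinj : Function.Injective A := by
    intro i j h
    by_contra hne
    rcases Nat.lt_or_ge (i : ℕ) (j : ℕ) with hlt | hge
    · exact hAne i j hlt h
    · have : (j : ℕ) < (i : ℕ) := by
        rcases Nat.lt_or_ge (j : ℕ) (i : ℕ) with h' | h'
        · exact h'
        · exact absurd (Fin.ext (le_antisymm h' hge)) hne
      exact hAne j i this h.symm
  -- key localization lemma
  have key : ∀ (α : Fin d → ℤ) (σ : Equiv.Perm (Fin d)) (i : Fin (d + 1)),
      ((fun k => y k - ((α k : ℤ) : ℝ)) + vert d σ i) ∈ Dset d σ →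
        σ = σ₀ ∧ α = A i := by
    intro α σ i hmem
    set p : Fin d → ℝ := (fun k => y k - ((α k : ℤ) : ℝ)) + vert d σ i with hp
    have hpb : ∀ k, 0 ≤ p k ∧ p k < 1 :=
      ((mem_Dset_iff d p σ).1 hmem).1
    have hαk : ∀ k, α k = β k + if ((σ.symm k : ℕ) < (i : ℕ)) then 1 else 0 := by
      intro k
      have hpk : p k = y k - ((α k - if ((σ.symm k : ℕ) < (i : ℕ)) then 1 else 0 : ℤ) : ℝ) := by
        simp only [hp, Pi.add_apply, vert]
        push_cast
        split_ifs <;> ring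
      set m : ℤ := α k - if ((σ.symm k : ℕ) < (i : ℕ)) then 1 else 0 with hm
      have h1 : (m : ℝ) ≤ y k := by
        have := (hpb k).1; rw [hpk] at this; linarith
      have h2 : y k < m + 1 := by
        have := (hpb k).2; rw [hpk] at this; push_cast; linarith
      have hfl : ⌊y k⌋ = m := Int.floor_eq_iff.2 ⟨h1, by exact_mod_cast h2⟩
      simp only [hβ]
      omega
    have hpz : p = z := by
      funext k
      have hpk : p k = y k - ((α k - if ((σ.symm k : ℕ) < (i : ℕ)) then 1 else 0 : ℤ) : ℝ) := by
        simp only [hp, Pi.add_apply, vert]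
        push_cast
        split_ifs <;> ring
      rw [hpk, hz]
      have := hαk k
      rw [this]
      simp only [hβ]
      push_cast
      rw [← Int.self_sub_floor]
      ring
    have hσ : σ = σ₀ := huniq σ (hpz ▸ hmem)
    refine ⟨hσ, ?_⟩
    funext k
    rw [hαk k, hA, hσ]
  -- value at lattice points A i
  have hFA : ∀ i : Fin (d + 1),
      tent d (fun k => y k - ((A i k : ℤ) : ℝ)) = Hfun d σ₀ i z := by
    intro i
    unfold tent
    rw [Finset.sum_eq_single σ₀]
    · rw [Finset.sum_eq_single i]
      · rw [hyA i, Set.indicator_of_mem hσ₀, one_mul]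
      · intro j _ hj
        by_cases hmem : ((fun k => y k - ((A i k : ℤ) : ℝ)) + vert d σ₀ j) ∈ Dset d σ₀
        · exact absurd (hAinj (key (A i) σ₀ j hmem).2) (Ne.symm hj)
        · rw [Set.indicator_of_notMem hmem, zero_mul]
      · intro h; exact absurd (Finset.mem_univ i) h
    · intro σ _ hσ
      apply Finset.sum_eq_zero
      intro j _
      by_cases hmem : ((fun k => y k - ((A i k : ℤ) : ℝ)) + vert d σ j) ∈ Dset d σ
      · exact absurd (key (A i) σ j hmem).1 hσ
      · rw [Set.indicator_of_notMem hmem, zero_mul]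
    · intro h; exact absurd (Finset.mem_univ σ₀) h
  -- vanishing off the lattice points
  have hsupp : ∀ α : Fin d → ℤ, α ∉ Finset.image A Finset.univ →
      tent d (fun k => y k - ((α k : ℤ) : ℝ)) = 0 := by
    intro α hα
    unfold tent
    apply Finset.sum_eq_zero
    intro σ _
    apply Finset.sum_eq_zero
    intro j _
    by_cases hmem : ((fun k => y k - ((α k : ℤ) : ℝ)) + vert d σ j) ∈ Dset d σ
    · exact absurd (Finset.mem_image.2 ⟨j, Finset.mem_univ j, (key α σ j hmem).2.symm⟩) hα
    · rw [Set.indicator_of_notMem hmem, zero_mul]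
  calc ∑' α : Fin d → ℤ, tentR d r (fun k => r * (α k : ℝ)) x
      = ∑' α : Fin d → ℤ, tent d (fun k => y k - ((α k : ℤ) : ℝ)) := tsum_congr htr
    _ = ∑ α ∈ Finset.image A Finset.univ, tent d (fun k => y k - ((α k : ℤ) : ℝ)) :=
        tsum_eq_sum hsupp
    _ = ∑ i : Fin (d + 1), tent d (fun k => y k - ((A i k : ℤ) : ℝ)) :=
        Finset.sum_image fun i _ j _ h => hAinj h
    _ = ∑ i : Fin (d + 1), Hfun d σ₀ i z := Finset.sum_congr rfl fun i _ => hFA i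
    _ = 1 := Hsum d (by omega) σ₀ z
end

section
/- Let w : rℤ^d → ℝ be bounded and u = Σ_{α ∈ rℤ^d} w_α χ_r^α. Then for each i, the function (1/r) Σ_{α ∈ rℤ^d} Σ_{T ∈ 𝒯_r : T(σ_T^{-1}(i)-1) = α} (w_{α + r e_i} - w_α) 1_{D_T} is a version of the i-th weak partial derivative of u. -/
/-- The `i`-th vertex of the CFK path of `σ`, in lattice coordinates. -/
def vertZ (d : ℕ) (σ : Equiv.Perm (Fin d)) (i : Fin (d + 1)) : Fin d → ℤ :=
  fun k => if ((σ.symm k : ℕ) < (i : ℕ)) then 1 else 0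

/-- The weighted sum `u = Σ_{α ∈ rℤ^d} w_α χ_r^α`. -/
noncomputable def uFun (d : ℕ) (r : ℝ) (w : (Fin d → ℤ) → ℝ) (x : Fin d → ℝ) : ℝ :=
  ∑' α : Fin d → ℤ, w α * tentR d r (fun k => r * (α k : ℝ)) x

/-- The simplex `D_T` for the path `T = rβ + r·(path of σ)` of the rescaled
triangulation `𝒯_r`. -/
def shiftedSimplex (d : ℕ) (r : ℝ) (β : Fin d → ℤ) (σ : Equiv.Perm (Fin d)) :
    Set (Fin d → ℝ) :=
  {x | (fun k => (x k - r * (β k : ℝ)) / r) ∈ Dset d σ}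

/-- The candidate `i`-th weak partial derivative
`(1/r) Σ_{α ∈ rℤ^d} Σ_{T ∈ 𝒯_r : T(σ_T⁻¹(i)-1) = α} (w_{α + r e_i} - w_α) 1_{D_T}`;
here `T` ranges over pairs `(β, σ)` and the node `α = T(σ⁻¹(i)-1)` has lattice
coordinates `β + vertZ σ (σ⁻¹ i)`. -/
noncomputable def vFun (d : ℕ) (r : ℝ) (w : (Fin d → ℤ) → ℝ) (i : Fin d)
    (x : Fin d → ℝ) : ℝ :=
  (1 / r) * ∑' β : Fin d → ℤ, ∑ σ : Equiv.Perm (Fin d),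
    (w (fun k => β k + vertZ d σ ((σ.symm i).castSucc) k + (if k = i then 1 else 0)) -
      w (fun k => β k + vertZ d σ ((σ.symm i).castSucc) k)) *
    Set.indicator (shiftedSimplex d r β σ) (fun _ => (1 : ℝ)) x

namespace CFK

variable {d : ℕ}

lemma strictMono_of_consec {α : Type*} [Preorder α] (f : Fin d → α)
    (h : ∀ i j : Fin d, (i : ℕ) + 1 = (j : ℕ) → f i < f j) : StrictMono f := by
  have key : ∀ n : ℕ, ∀ a b : Fin d, (b : ℕ) = (a : ℕ) + n + 1 → f a < f b := by
    intro n
    induction n with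
    | zero => intro a b hb; exact h a b (by omega)
    | succ n ih =>
        intro a b hb
        have hb1 : (b : ℕ) - 1 < d := by omega
        have h1 : f a < f ⟨(b : ℕ) - 1, hb1⟩ := ih a _ (by simp only [Fin.val_mk]; omega)
        exact h1.trans (h ⟨(b : ℕ) - 1, hb1⟩ b (by simp only [Fin.val_mk]; omega))
  intro a b hab
  have hab' : (a : ℕ) < (b : ℕ) := hab
  exact key ((b : ℕ) - (a : ℕ) - 1) a b (by omega)

/-- The sorting key: lexicographic on `(-value, -index)`. -/
def key (p : Fin d → ℝ) (k : Fin d) : ℝ ×ₗ ℤ := toLex (-p k, -(k : ℤ))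

lemma key_injective (p : Fin d → ℝ) : Function.Injective (key p) := by
  intro a b hab
  have h2 : -((a : ℕ) : ℤ) = -((b : ℕ) : ℤ) := congrArg (fun q => (ofLex q).2) hab
  exact Fin.ext (by omega)

lemma key_lt_iff {p : Fin d → ℝ} {a b : Fin d} :
    key p a < key p b ↔ p b < p a ∨ (p a = p b ∧ b < a) := by
  rw [key, key, Prod.Lex.lt_iff]
  constructor
  · rintro (h | ⟨h1, h2⟩)
    · exact Or.inl (by simpa using h)
    · refine Or.inr ⟨neg_injective h1, ?_⟩
      replace h2 : -((a : ℕ) : ℤ) < -((b : ℕ) : ℤ) := h2; simp only [neg_lt_neg_iff] at h2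
      exact_mod_cast h2
  · rintro (h | ⟨h1, h2⟩)
    · exact Or.inl (by simpa using h)
    · exact Or.inr ⟨by simp [h1], by exact_mod_cast neg_lt_neg ((by exact_mod_cast h2 : (b:ℤ) < a))⟩

lemma mem_Dset_iff {σ : Equiv.Perm (Fin d)} {p : Fin d → ℝ} :
    p ∈ Dset d σ ↔ (∀ k, 0 ≤ p k ∧ p k < 1) ∧ StrictMono (key p ∘ σ) := by
  constructor
  · rintro ⟨h1, h2⟩
    refine ⟨fun k => by simpa using h1 (σ.symm k), ?_⟩
    apply strictMono_of_consec
    intro i j hij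
    have := h2 i j hij
    simp only [Function.comp_apply]
    rw [key_lt_iff]
    rcases lt_trichotomy (σ i) (σ j) with h | h | h
    · rw [if_pos h] at this; exact Or.inl this
    · exact absurd h (σ.injective.ne (Fin.ne_of_val_ne (by omega)))
    · rw [if_neg (not_lt.mpr h.le)] at this
      rcases this.lt_or_eq with h' | h'
      · exact Or.inl h'
      · exact Or.inr ⟨h'.symm, h⟩
  · rintro ⟨h1, h2⟩
    refine ⟨fun i => h1 (σ i), ?_⟩
    intro i j hij
    have := h2 (show i < j by rw [Fin.lt_def]; omega)
    rw [Function.comp_apply, Function.comp_apply, key_lt_iff] at this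
    rcases this with h | ⟨h1', h2'⟩
    · split <;> [exact h; exact h.le]
    · rw [if_neg (not_lt.mpr h2'.le)]
      exact h1'.ge

/-- The canonical sorting permutation of (the fractional parts of) `z`. -/
noncomputable def prm (z : Fin d → ℝ) : Equiv.Perm (Fin d) :=
  Tuple.sort (key (fun k => Int.fract (z k)))

lemma frac_mem_Dset_prm (z : Fin d → ℝ) : (fun k => Int.fract (z k)) ∈ Dset d (prm z) := by
  rw [mem_Dset_iff]
  refine ⟨fun k => ⟨Int.fract_nonneg _, Int.fract_lt_one _⟩, ?_⟩
  exact (Tuple.monotone_sort _).strictMono_of_injective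
    ((key_injective _).comp (prm z).injective)

lemma eq_prm_of_mem {σ : Equiv.Perm (Fin d)} {z : Fin d → ℝ}
    (h : (fun k => Int.fract (z k)) ∈ Dset d σ) : σ = prm z := by
  rw [mem_Dset_iff] at h
  have h2 := Tuple.unique_monotone (f := key (fun k => Int.fract (z k)))
    h.2.monotone (Tuple.monotone_sort _)
  ext1 k
  exact key_injective _ (congrFun h2 k)

/-- Canonical cell: `z - β ∈ Dset σ` iff `β` is the floor vector and `σ = prm z`. -/
lemma cell_mem_iff {z : Fin d → ℝ} {β : Fin d → ℤ} {σ : Equiv.Perm (Fin d)} :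
    (fun k => z k - (β k : ℝ)) ∈ Dset d σ ↔ (∀ k, β k = ⌊z k⌋) ∧ σ = prm z := by
  constructor
  · intro h
    have hβ : ∀ k, β k = ⌊z k⌋ := by
      intro k
      have h1 := (mem_Dset_iff.mp h).1 k
      exact (Int.floor_eq_iff.mpr ⟨by linarith [h1.1], by linarith [h1.2]⟩).symm
    have hfr : (fun k => z k - (β k : ℝ)) = fun k => Int.fract (z k) := by
      funext k; rw [hβ k, Int.fract]
    exact ⟨hβ, eq_prm_of_mem (hfr ▸ h)⟩
  · rintro ⟨hβ, rfl⟩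
    have hfr : (fun k => z k - (β k : ℝ)) = fun k => Int.fract (z k) := by
      funext k; rw [hβ k, Int.fract]
    rw [hfr]
    exact frac_mem_Dset_prm z

lemma prm_sub_int (z : Fin d → ℝ) (m : Fin d → ℤ) :
    prm (fun k => z k - (m k : ℝ)) = prm z := by
  unfold prm
  have h : (fun k => Int.fract (z k - (m k : ℝ))) = fun k => Int.fract (z k) := by
    funext k; exact Int.fract_sub_intCast _ _
  rw [h]



/-- The `ι`-th lattice node of the canonical cell of `z`. -/
noncomputable def node (z : Fin d → ℝ) (ι : Fin (d + 1)) : Fin d → ℤ :=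
  fun k => ⌊z k⌋ + vertZ d (prm z) ι k

lemma pt_eq (z : Fin d → ℝ) (α : Fin d → ℤ) (σ : Equiv.Perm (Fin d)) (ι : Fin (d + 1)) :
    (fun k => z k - (α k : ℝ)) + vert d σ ι =
      fun k => z k - ((α k - vertZ d σ ι k : ℤ) : ℝ) := by
  funext k
  simp only [Pi.add_apply, vert, vertZ]
  split <;> push_cast <;> ring

lemma tent_apply (z : Fin d → ℝ) (α : Fin d → ℤ) :
    tent d (fun k => z k - (α k : ℝ)) =
      ∑ ι : Fin (d + 1), if α = node z ι then
        Hfun d (prm z) ι (fun k => Int.fract (z k)) else 0 := by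
  classical
  rw [tent]
  rw [Finset.sum_eq_single (prm z)]
  rotate_left
  · intro σ _ hσ
    apply Finset.sum_eq_zero
    intro ι _
    rw [pt_eq, Set.indicator_apply, if_neg, zero_mul]
    intro hmem
    exact hσ (cell_mem_iff.mp hmem).2
  · intro h; exact absurd (Finset.mem_univ _) h
  · apply Finset.sum_congr rfl
    intro ι _
    rw [pt_eq, Set.indicator_apply]
    by_cases hc : α = node z ι
    · rw [if_pos, if_pos hc, one_mul]
      · congr 1
        funext k
        have hck : α k = ⌊z k⌋ + vertZ d (prm z) ι k := by rw [hc]; rfl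
        rw [Int.fract]
        push_cast [hck]
        ring
      · rw [cell_mem_iff]
        refine ⟨fun k => ?_, rfl⟩
        have hck : α k = ⌊z k⌋ + vertZ d (prm z) ι k := by rw [hc]; rfl
        omega
    · rw [if_neg, if_neg hc, zero_mul]
      intro hmem
      apply hc
      funext k
      have := (cell_mem_iff.mp hmem).1 k
      simp only [node]
      omega

lemma uFun_eq {r : ℝ} (hr : r ≠ 0) (w : (Fin d → ℤ) → ℝ) (x : Fin d → ℝ) :
    uFun d r w x = ∑ ι : Fin (d + 1),
      w (node (fun k => x k / r) ι) *
        Hfun d (prm (fun k => x k / r)) ι (fun k => Int.fract (x k / r)) := by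
  have harg : ∀ α : Fin d → ℤ, (fun k => (x k - r * (α k : ℝ)) / r) =
      fun k => (x k / r) - ((α k : ℤ) : ℝ) := by
    intro α; funext k; field_simp
  have h1 : ∀ α : Fin d → ℤ, w α * tentR d r (fun k => r * (α k : ℝ)) x =
      ∑ ι : Fin (d + 1), if α = node (fun k => x k / r) ι then
        w (node (fun k => x k / r) ι) *
          Hfun d (prm (fun k => x k / r)) ι (fun k => Int.fract (x k / r)) else 0 := by
    intro α
    rw [tentR, harg, tent_apply, Finset.mul_sum]
    refine Finset.sum_congr rfl fun ι _ => ?_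
    rw [mul_ite, mul_zero]
    by_cases h : α = node (fun k => x k / r) ι
    · rw [if_pos h, if_pos h, h]
    · rw [if_neg h, if_neg h]
  rw [uFun, tsum_congr h1, Summable.tsum_finsetSum]
  · exact Finset.sum_congr rfl fun ι _ => tsum_ite_eq _ _
  · intro ι _
    apply summable_of_ne_finset_zero (s := {node (fun k => x k / r) ι})
    intro α hα
    rw [Finset.mem_singleton] at hα
    rw [if_neg hα]

lemma vFun_eq {r : ℝ} (hr : r ≠ 0) (w : (Fin d → ℤ) → ℝ) (i : Fin d) (x : Fin d → ℝ) :
    vFun d r w i x = (1 / r) *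
      (w (fun k => node (fun j => x j / r)
            (((prm (fun j => x j / r)).symm i).castSucc) k + (if k = i then 1 else 0)) -
       w (node (fun j => x j / r) (((prm (fun j => x j / r)).symm i).castSucc))) := by
  classical
  rw [vFun]
  congr 1
  have hmem : ∀ (β : Fin d → ℤ) (σ : Equiv.Perm (Fin d)),
      x ∈ shiftedSimplex d r β σ ↔ ((∀ k, β k = ⌊x k / r⌋) ∧ σ = prm (fun j => x j / r)) := by
    intro β σ
    have harg : (fun k => (x k - r * (β k : ℝ)) / r) =
        fun k => (x k / r) - ((β k : ℤ) : ℝ) := by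
      funext k; field_simp
    rw [shiftedSimplex, Set.mem_setOf_eq, harg, cell_mem_iff]
  have h1 : ∀ β : Fin d → ℤ,
      (∑ σ : Equiv.Perm (Fin d),
        (w (fun k => β k + vertZ d σ ((σ.symm i).castSucc) k + (if k = i then 1 else 0)) -
          w (fun k => β k + vertZ d σ ((σ.symm i).castSucc) k)) *
        Set.indicator (shiftedSimplex d r β σ) (fun _ => (1 : ℝ)) x) =
      if β = (fun k => ⌊x k / r⌋) then
        (w (fun k => node (fun j => x j / r)
              (((prm (fun j => x j / r)).symm i).castSucc) k + (if k = i then 1 else 0)) -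
         w (node (fun j => x j / r) (((prm (fun j => x j / r)).symm i).castSucc))) else 0 := by
    intro β
    rw [Finset.sum_eq_single (prm (fun j => x j / r))]
    rotate_left
    · intro σ _ hσ
      rw [Set.indicator_apply, if_neg, mul_zero]
      intro hmemx
      exact hσ ((hmem β σ).mp hmemx).2
    · intro h; exact absurd (Finset.mem_univ _) h
    · rw [Set.indicator_apply]
      by_cases hc : β = (fun k => ⌊x k / r⌋)
      · rw [if_pos ((hmem _ _).mpr ⟨fun k => by rw [hc], rfl⟩), mul_one, if_pos hc]
        have hβ : ∀ k, β k = ⌊x k / r⌋ := fun k => by rw [hc]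
        congr 1 <;> [skip; skip] <;> congr 1 <;> funext k <;> simp only [node] <;> rw [hβ k]
      · rw [if_neg, mul_zero, if_neg hc]
        intro hmemx
        exact hc (funext fun k => ((hmem β _).mp hmemx).1 k)
  rw [tsum_congr h1, tsum_ite_eq]


/-- Closed form of the tent function. -/
noncomputable def gtent (z : Fin d → ℝ) : ℝ :=
  max 0 (1 - max 0 (⨆ k, z k) + min 0 (⨅ k, z k))

section gtent
variable (hd : 0 < d)

lemma gtent_nonneg (z : Fin d → ℝ) : 0 ≤ gtent z := le_max_left _ _

lemma gtent_le_one (z : Fin d → ℝ) : gtent z ≤ 1 := by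
  have h1 : (0:ℝ) ≤ max 0 (⨆ k, z k) := le_max_left _ _
  have h2 : min 0 (⨅ k, z k) ≤ 0 := min_le_left _ _
  exact max_le zero_le_one (by linarith)

include hd

lemma gtent_eq_zero {z : Fin d → ℝ} (hk : ∃ k, 1 ≤ |z k|) : gtent z = 0 := by
  have : Nonempty (Fin d) := ⟨⟨0, hd⟩⟩
  obtain ⟨k, hk⟩ := hk
  have hbdd : BddAbove (Set.range z) := (Set.finite_range z).bddAbove
  have hbddB : BddBelow (Set.range z) := (Set.finite_range z).bddBelow
  have h1 : (0:ℝ) ≤ max 0 (⨆ k, z k) := le_max_left _ _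
  have h2 : min 0 (⨅ k, z k) ≤ 0 := min_le_left _ _
  rcases le_abs'.mp hk with h | h
  · have hz : z k ≤ -1 := by linarith
    have : min 0 (⨅ j, z j) ≤ -1 := le_trans (min_le_right _ _) ((ciInf_le hbddB k).trans hz)
    exact max_eq_left (by linarith)
  · have : (1:ℝ) ≤ max 0 (⨆ j, z j) :=
      le_trans h ((le_ciSup hbdd k).trans (le_max_right _ _))
    exact max_eq_left (by linarith)

lemma gtent_sub_le {z z' : Fin d → ℝ} {c : ℝ} (hc : ∀ k, |z k - z' k| ≤ c) :
    |gtent z - gtent z'| ≤ 2 * c := by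
  have : Nonempty (Fin d) := ⟨⟨0, hd⟩⟩
  have hbdd : ∀ w : Fin d → ℝ, BddAbove (Set.range w) := fun w => (Set.finite_range w).bddAbove
  have hbddB : ∀ w : Fin d → ℝ, BddBelow (Set.range w) := fun w => (Set.finite_range w).bddBelow
  have hc0 : 0 ≤ c := le_trans (abs_nonneg _) (hc ⟨0, hd⟩)
  have hS : |(⨆ k, z k) - ⨆ k, z' k| ≤ c := by
    rw [abs_le]
    constructor
    · rw [neg_le, neg_sub]
      refine sub_le_iff_le_add.mpr (ciSup_le fun k => ?_)
      have := abs_le.mp (hc k)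
      have h2 := le_ciSup (hbdd z) k
      linarith
    · refine sub_le_iff_le_add.mpr (ciSup_le fun k => ?_)
      have := abs_le.mp (hc k)
      have h2 := le_ciSup (hbdd z') k
      linarith
  have hI : |(⨅ k, z k) - ⨅ k, z' k| ≤ c := by
    obtain ⟨k1, hk1⟩ := Finite.exists_min z
    obtain ⟨k2, hk2⟩ := Finite.exists_min z'
    have e1 : (⨅ k, z k) = z k1 := le_antisymm (ciInf_le (hbddB z) k1) (le_ciInf hk1)
    have e2 : (⨅ k, z' k) = z' k2 := le_antisymm (ciInf_le (hbddB z') k2) (le_ciInf hk2)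
    rw [abs_le, e1, e2]
    constructor
    · have := abs_le.mp (hc k1); have := hk2 k1; linarith
    · have := abs_le.mp (hc k2); have := hk1 k2; linarith
  have hS' : |max 0 (⨆ k, z k) - max 0 (⨆ k, z' k)| ≤ c := by
    refine le_trans (abs_max_sub_max_le_max 0 _ 0 _) ?_
    simpa using hS
  have hI' : |min 0 (⨅ k, z k) - min 0 (⨅ k, z' k)| ≤ c := by
    refine le_trans (abs_min_sub_min_le_max 0 _ 0 _) ?_
    simpa using hI
  unfold gtent
  refine le_trans (abs_max_sub_max_le_max 0 _ 0 _) ?_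
  have := abs_le.mp hS'
  have := abs_le.mp hI'
  rw [max_le_iff]
  constructor
  · simpa using by linarith [hc0]
  · rw [abs_le]; constructor <;> linarith [abs_le.mp hS', abs_le.mp hI']

/-- The key lemma: on the closed simplex of `σ`, the sum over vertices of the
translated barycentric coordinates equals the closed form. -/
lemma dagger (σ : Equiv.Perm (Fin d)) (y : Fin d → ℝ)
    (h0 : ∀ k, 0 ≤ y k) (h1 : ∀ k, y k ≤ 1)
    (hmono : ∀ a b : Fin d, a ≤ b → y (σ b) ≤ y (σ a)) (β : Fin d → ℤ) :
    (∑ ι : Fin (d + 1), if (∀ k, β k = if ((σ.symm k : ℕ) < (ι : ℕ)) then -1 else 0)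
        then Hfun d σ ι y else 0) = gtent (fun k => y k + (β k : ℝ)) := by
  classical
  have : Nonempty (Fin d) := ⟨⟨0, hd⟩⟩
  set z : Fin d → ℝ := fun k => y k + (β k : ℝ) with hzdef
  have hbdd : BddAbove (Set.range z) := (Set.finite_range z).bddAbove
  have hbddB : BddBelow (Set.range z) := (Set.finite_range z).bddBelow
  by_cases hex : ∃ ι : Fin (d + 1),
      ∀ k, β k = if ((σ.symm k : ℕ) < (ι : ℕ)) then -1 else 0
  · obtain ⟨ι, hι⟩ := hex
    have huniq : ∀ ι₁ ι₂ : Fin (d + 1), (ι₁ : ℕ) < (ι₂ : ℕ) →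
        (∀ k, β k = if ((σ.symm k : ℕ) < (ι₁ : ℕ)) then -1 else 0) →
        (∀ k, β k = if ((σ.symm k : ℕ) < (ι₂ : ℕ)) then -1 else 0) → False := by
      intro ι₁ ι₂ hlt hc1 hc2
      have hd1 : (ι₁ : ℕ) < d := by have := ι₂.isLt; omega
      have e1 := hc1 (σ ⟨(ι₁ : ℕ), hd1⟩)
      have e2 := hc2 (σ ⟨(ι₁ : ℕ), hd1⟩)
      rw [Equiv.symm_apply_apply] at e1 e2
      simp only [Fin.val_mk] at e1 e2
      rw [if_neg (lt_irrefl _)] at e1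
      rw [if_pos hlt] at e2
      omega
    rw [Finset.sum_eq_single ι]
    rotate_left
    · intro ι' _ hne
      rw [if_neg]
      intro hc
      rcases lt_trichotomy ((ι' : ℕ)) ((ι : ℕ)) with h | h | h
      · exact huniq ι' ι h hc hι
      · exact hne (Fin.ext h)
      · exact huniq ι ι' h hι hc
    · intro h; exact absurd (Finset.mem_univ _) h
    rw [if_pos hι]
    -- compute sup and inf
    have hzval : ∀ k, z k = if ((σ.symm k : ℕ) < (ι : ℕ)) then y k - 1 else y k := by
      intro k
      rw [hzdef]
      simp only []
      rw [hι k]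
      split <;> push_cast <;> ring
    have hSup : max 0 (⨆ k, z k) = if h : (ι : ℕ) < d then y (σ ⟨(ι : ℕ), h⟩) else 0 := by
      apply le_antisymm
      · rw [max_le_iff]
        constructor
        · split
          · exact h0 _
          · exact le_refl 0
        · apply ciSup_le
          intro k
          rw [hzval k]
          split
          · split
            · linarith [h1 k, h0 (σ ⟨(ι : ℕ), by assumption⟩)]
            · linarith [h1 k]
          · have hk : (ι : ℕ) ≤ ((σ.symm k : ℕ)) := by omega
            have hd2 : (ι : ℕ) < d := lt_of_le_of_lt hk (σ.symm k).isLt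
            rw [dif_pos hd2]
            have := hmono ⟨(ι : ℕ), hd2⟩ (σ.symm k) (by rwa [Fin.le_def])
            rwa [Equiv.apply_symm_apply] at this
      · split
        · next h =>
          have : z (σ ⟨(ι : ℕ), h⟩) = y (σ ⟨(ι : ℕ), h⟩) := by
            rw [hzval]
            rw [if_neg]
            rw [Equiv.symm_apply_apply]
            simp
          exact le_trans (this ▸ le_ciSup hbdd (σ ⟨(ι : ℕ), h⟩)) (le_max_right _ _)
        · exact le_max_left _ _
    have hInf : min 0 (⨅ k, z k) =
        if h : (ι : ℕ) ≠ 0 then y (σ ⟨(ι : ℕ) - 1, by have := ι.isLt; omega⟩) - 1 else 0 := by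
      apply le_antisymm
      · split
        · next h =>
          have hlt : (ι : ℕ) - 1 < d := by have := ι.isLt; omega
          have : z (σ ⟨(ι : ℕ) - 1, hlt⟩) = y (σ ⟨(ι : ℕ) - 1, hlt⟩) - 1 := by
            rw [hzval, if_pos]
            rw [Equiv.symm_apply_apply]
            simp only [Fin.val_mk]
            omega
          exact le_trans (min_le_right _ _) (this ▸ ciInf_le hbddB (σ ⟨(ι : ℕ) - 1, hlt⟩))
        · exact min_le_left _ _
      · rw [le_min_iff]
        refine ⟨?_, le_ciInf fun k => ?_⟩
        · split
          · next h => linarith [h1 (σ ⟨(ι : ℕ) - 1, by have := ι.isLt; omega⟩)]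
          · exact le_refl 0
        · by_cases hne : (ι : ℕ) ≠ 0
          · rw [dif_pos hne, hzval k]
            split
            · next hk =>
              have hlt : (ι : ℕ) - 1 < d := by have := ι.isLt; omega
              have := hmono (σ.symm k) ⟨(ι : ℕ) - 1, hlt⟩
                (by rw [Fin.le_def]; simp only [Fin.val_mk]; omega)
              rw [Equiv.apply_symm_apply] at this
              linarith
            · linarith [h0 k, h1 (σ ⟨(ι : ℕ) - 1, by have := ι.isLt; omega⟩)]
          · rw [dif_neg hne, hzval k]
            rw [if_neg (by omega)]
            exact h0 k
    unfold gtent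
    rw [hSup, hInf]
    rw [Hfun]
    by_cases h00 : (ι : ℕ) = 0
    · rw [dif_pos h00]
      have hltd : (ι : ℕ) < d := by omega
      rw [dif_pos hltd, dif_neg (by omega : ¬ (ι : ℕ) ≠ 0)]
      rw [max_eq_right]
      · ring
      · linarith [h1 (σ ⟨(ι : ℕ), hltd⟩)]
    · rw [dif_neg h00, dif_pos (by omega : (ι : ℕ) ≠ 0)]
      by_cases hltd : (ι : ℕ) < d
      · rw [dif_pos hltd]
        rw [max_eq_right]
        · ring
        · have := hmono ⟨(ι : ℕ) - 1, by omega⟩ ⟨(ι : ℕ), hltd⟩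
            (by rw [Fin.le_def]; simp only [Fin.val_mk]; omega)
          linarith
      · rw [dif_neg hltd]
        rw [max_eq_right]
        · ring
        · linarith [h0 (σ ⟨(ι : ℕ) - 1, by have := ι.isLt; omega⟩)]
  · rw [Finset.sum_eq_zero]
    rotate_left
    · intro ι _
      rw [if_neg]
      intro h
      exact hex ⟨ι, h⟩
    symm
    have hA : (0:ℝ) ≤ max 0 (⨆ k, z k) := le_max_left _ _
    have hB : min 0 (⨅ k, z k) ≤ 0 := min_le_left _ _
    by_cases hbig : ∃ k, 1 ≤ β k
    · obtain ⟨k, hk⟩ := hbig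
      have hzk : (1:ℝ) ≤ z k := by
        rw [hzdef]
        have : (1:ℝ) ≤ (β k : ℝ) := by exact_mod_cast hk
        simpa using by linarith [h0 k]
      have : (1:ℝ) ≤ max 0 (⨆ j, z j) := le_trans hzk ((le_ciSup hbdd k).trans (le_max_right _ _))
      exact max_eq_left (by linarith)
    by_cases hsmall : ∃ k, β k ≤ -2
    · obtain ⟨k, hk⟩ := hsmall
      have hzk : z k ≤ -1 := by
        rw [hzdef]
        have : (β k : ℝ) ≤ -2 := by exact_mod_cast hk
        simpa using by linarith [h1 k]
      have : min 0 (⨅ j, z j) ≤ -1 := le_trans (min_le_right _ _) ((ciInf_le hbddB k).trans hzk)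
      exact max_eq_left (by linarith)
    push_neg at hbig hsmall
    have hrange : ∀ k, β k = -1 ∨ β k = 0 := by
      intro k
      have := hbig k
      have := hsmall k
      omega
    -- β ∘ σ is not downward closed
    have hnotdc : ∃ j₁ j₂ : Fin d, j₁ ≤ j₂ ∧ β (σ j₂) = -1 ∧ β (σ j₁) = 0 := by
      by_contra hdc
      push_neg at hdc
      apply hex
      set s : Finset (Fin d) := Finset.univ.filter (fun j => β (σ j) = -1) with hs
      have hcard : s.card ≤ d := le_trans (Finset.card_filter_le _ _) (by simp)
      refine ⟨⟨s.card, by omega⟩, fun k => ?_⟩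
      simp only [Fin.val_mk]
      have hmemiff : ∀ j : Fin d, j ∈ s ↔ (j : ℕ) < s.card := by
        intro j
        constructor
        · intro hj
          have hsub : Finset.Iic j ⊆ s := by
            intro j' hj'
            rw [Finset.mem_Iic] at hj'
            rw [hs, Finset.mem_filter]
            refine ⟨Finset.mem_univ _, ?_⟩
            rcases hrange (σ j') with h | h
            · exact h
            · exact absurd (hdc j' j hj' (by rw [hs, Finset.mem_filter] at hj; exact hj.2) h).elim id
          have := Finset.card_le_card hsub
          rw [Fin.card_Iic] at this
          omega
        · intro hj
          by_contra hns
          have hsub : s ⊆ Finset.Iio j := by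
            intro j' hj'
            rw [Finset.mem_Iio]
            by_contra hge
            push_neg at hge
            rw [hs, Finset.mem_filter] at hj'
            rcases hrange (σ j) with h | h
            · exact hns (by rw [hs, Finset.mem_filter]; exact ⟨Finset.mem_univ _, h⟩)
            · exact absurd (hdc j j' hge hj'.2 h).elim id
          have := Finset.card_le_card hsub
          rw [Fin.card_Iio] at this
          omega
      have := hmemiff (σ.symm k)
      rw [hs, Finset.mem_filter, Equiv.apply_symm_apply] at this
      split
      · next h => exact (this.mpr h).2
      · next h =>
        rcases hrange k with h' | h'
        · exact absurd (this.mp ⟨Finset.mem_univ _, h'⟩) h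
        · exact h'
    obtain ⟨j₁, j₂, hle, h2, h1'⟩ := hnotdc
    have hz1 : z (σ j₁) = y (σ j₁) := by rw [hzdef]; simp [h1']
    have hz2 : z (σ j₂) = y (σ j₂) - 1 := by rw [hzdef]; simp [h2]; ring
    have hA' : y (σ j₁) ≤ max 0 (⨆ j, z j) :=
      le_trans (hz1 ▸ le_ciSup hbdd (σ j₁)) (le_max_right _ _)
    have hB' : min 0 (⨅ j, z j) ≤ y (σ j₂) - 1 :=
      le_trans (min_le_right _ _) (hz2 ▸ ciInf_le hbddB (σ j₂))
    have := hmono j₁ j₂ hle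
    exact max_eq_left (by linarith)

lemma tent_eq_gtent (z : Fin d → ℝ) : tent d z = gtent z := by
  classical
  have h := tent_apply z (fun _ => (0 : ℤ))
  have hz0 : (fun k => z k - (((0:ℤ) : ℝ))) = z := by funext k; simp
  rw [hz0] at h
  rw [h]
  have hchain := frac_mem_Dset_prm z
  rw [mem_Dset_iff] at hchain
  have hmono : ∀ a b : Fin d, a ≤ b →
      Int.fract (z ((prm z) b)) ≤ Int.fract (z ((prm z) a)) := by
    intro a b hab
    have := hchain.2.monotone (show a ≤ b from hab)
    rw [Function.comp_apply, Function.comp_apply, key, key, Prod.Lex.le_iff] at this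
    rcases this with h' | ⟨h', _⟩
    · have h'' : -Int.fract (z (prm z a)) < -Int.fract (z (prm z b)) := h'; linarith [h'']
    · have : Int.fract (z (prm z a)) = Int.fract (z (prm z b)) := by
        have := congrArg Neg.neg h'
        simpa using this
      linarith [this.le]
  have hd2 := dagger hd (prm z) (fun k => Int.fract (z k))
    (fun k => Int.fract_nonneg _) (fun k => (Int.fract_lt_one _).le) hmono (fun k => ⌊z k⌋)
  have harg : (fun k => Int.fract (z k) + ((⌊z k⌋ : ℤ) : ℝ)) = z := by
    funext k; exact Int.fract_add_floor (z k)
  rw [harg] at hd2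
  rw [← hd2]
  apply Finset.sum_congr rfl
  intro ι _
  refine if_congr ?_ rfl rfl
  rw [funext_iff]
  constructor
  · intro hcond k
    have := hcond k
    simp only [node, vertZ] at this
    split at this <;> split <;> omega
  · intro hcond k
    have := hcond k
    simp only [node, vertZ]
    split at this <;> split <;> omega

end gtent


section lip

variable (hd : 0 < d)
include hd

lemma tent_bound (z : Fin d → ℝ) : |tent d z| ≤ 1 := by
  rw [tent_eq_gtent hd]
  rw [abs_le]
  exact ⟨by linarith [gtent_nonneg (z := z)], gtent_le_one z⟩

lemma tent_zero {z : Fin d → ℝ} (hk : ∃ k, 1 ≤ |z k|) : tent d z = 0 := by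
  rw [tent_eq_gtent hd]
  exact gtent_eq_zero hd hk

omit hd

/-- A finite box of lattice points around `z`. -/
noncomputable def box (z : Fin d → ℝ) (c : ℕ) : Finset (Fin d → ℤ) :=
  Fintype.piFinset (fun k => Finset.Icc (⌊z k⌋ - c) (⌊z k⌋ + c))

lemma card_box (z : Fin d → ℝ) (c : ℕ) : (box z c).card = (2 * c + 1) ^ d := by
  rw [box, Fintype.card_piFinset]
  have : ∀ k : Fin d, (Finset.Icc (⌊z k⌋ - c) (⌊z k⌋ + c)).card = 2 * c + 1 := by
    intro k
    rw [Int.card_Icc]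
    omega
  simp only [this]
  rw [Finset.prod_const, Finset.card_fin]

lemma not_mem_box {z : Fin d → ℝ} {α : Fin d → ℤ} {c : ℕ} (h : α ∉ box z c) :
    ∃ k, (α k : ℝ) ≤ z k - c ∨ z k + c ≤ (α k : ℝ) := by
  rw [box, Fintype.mem_piFinset] at h
  push_neg at h
  obtain ⟨k, hk⟩ := h
  rw [Finset.mem_Icc] at hk
  refine ⟨k, ?_⟩
  have h1 : (⌊z k⌋ : ℝ) ≤ z k := Int.floor_le _
  have h2 : z k < (⌊z k⌋ : ℝ) + 1 := Int.lt_floor_add_one _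
  rcases (by omega : α k < ⌊z k⌋ - c ∨ ⌊z k⌋ + c < α k) with h | h
  · left
    have : (α k : ℝ) ≤ (⌊z k⌋ : ℝ) - c - 1 + 1 := by exact_mod_cast by omega
    linarith
  · right
    have : (⌊z k⌋ : ℝ) + c + 1 ≤ (α k : ℝ) := by exact_mod_cast by omega
    linarith

include hd

lemma uFun_bound {r : ℝ} (hr : 0 < r) {w : (Fin d → ℤ) → ℝ} {M : ℝ}
    (hM : ∀ α, |w α| ≤ M) (x : Fin d → ℝ) : |uFun d r w x| ≤ 3 ^ d * M := by
  have hM0 : 0 ≤ M := le_trans (abs_nonneg _) (hM (fun _ => 0))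
  have harg : ∀ α : Fin d → ℤ, (fun k => (x k - r * (α k : ℝ)) / r) =
      fun k => (x k / r) - (α k : ℝ) := by
    intro α; funext k; field_simp
  have hsupp : ∀ α ∉ box (fun k => x k / r) 1,
      w α * tentR d r (fun k => r * (α k : ℝ)) x = 0 := by
    intro α hα
    obtain ⟨k, hk⟩ := not_mem_box hα
    rw [tentR, harg, tent_zero hd ⟨k, ?_⟩, mul_zero]
    push_cast at hk
    rw [le_abs]
    rcases hk with h | h
    · left; linarith
    · right; linarith
  rw [uFun, tsum_eq_sum hsupp]
  calc |∑ α ∈ box (fun k => x k / r) 1, w α * tentR d r (fun k => r * (α k : ℝ)) x|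
      ≤ ∑ α ∈ box (fun k => x k / r) 1, |w α * tentR d r (fun k => r * (α k : ℝ)) x| :=
        Finset.abs_sum_le_sum_abs _ _
    _ ≤ ∑ _α ∈ box (fun k => x k / r) 1, M * 1 := by
        apply Finset.sum_le_sum
        intro α _
        rw [abs_mul]
        apply mul_le_mul (hM α) ?_ (abs_nonneg _) hM0
        rw [tentR, harg]
        exact tent_bound hd _
    _ = (3 : ℝ) ^ d * M := by
        rw [Finset.sum_const, card_box]
        push_cast
        ring

lemma uFun_lip {r : ℝ} (hr : 0 < r) {w : (Fin d → ℤ) → ℝ} {M : ℝ}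
    (hM : ∀ α, |w α| ≤ M) :
    LipschitzWith (Real.toNNReal ((2 * 3 ^ d * M + 2 * 5 ^ d * M) / r)) (uFun d r w) := by
  have hM0 : 0 ≤ M := le_trans (abs_nonneg _) (hM (fun _ => 0))
  have hK0 : (0:ℝ) ≤ (2 * 3 ^ d * M + 2 * 5 ^ d * M) / r := by positivity
  apply LipschitzWith.of_dist_le_mul
  intro x y
  rw [Real.coe_toNNReal _ hK0]
  have harg : ∀ (v : Fin d → ℝ) (α : Fin d → ℤ), (fun k => (v k - r * (α k : ℝ)) / r) =
      fun k => (v k / r) - (α k : ℝ) := by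
    intro v α; funext k; field_simp
  have hcoord : ∀ k, |x k / r - y k / r| ≤ dist x y / r := by
    intro k
    rw [div_sub_div_same, abs_div, abs_of_pos hr]
    gcongr
    rw [← Real.dist_eq]
    exact dist_le_pi_dist x y k
  rcases le_or_gt (dist x y) r with hnear | hfar
  · -- near case
    have hzz' : ∀ k, |x k / r - y k / r| ≤ 1 := by
      intro k
      refine (hcoord k).trans ?_
      rw [div_le_one hr]
      exact hnear
    have hfz : ∀ α ∉ box (fun k => x k / r) 2,
        w α * tentR d r (fun k => r * (α k : ℝ)) x = 0 := by
      intro α hα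
      obtain ⟨k, hk⟩ := not_mem_box hα
      rw [tentR, harg, tent_zero hd ⟨k, ?_⟩, mul_zero]
      push_cast at hk
      rw [le_abs]
      rcases hk with h | h
      · left; linarith
      · right; linarith
    have hgz : ∀ α ∉ box (fun k => x k / r) 2,
        w α * tentR d r (fun k => r * (α k : ℝ)) y = 0 := by
      intro α hα
      obtain ⟨k, hk⟩ := not_mem_box hα
      rw [tentR, harg, tent_zero hd ⟨k, ?_⟩, mul_zero]
      push_cast at hk
      have := abs_le.mp (hzz' k)
      rw [le_abs]
      rcases hk with h | h
      · left; linarith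
      · right; linarith
    rw [Real.dist_eq, uFun, uFun, tsum_eq_sum hfz, tsum_eq_sum hgz, ← Finset.sum_sub_distrib]
    calc |∑ α ∈ box (fun k => x k / r) 2,
            (w α * tentR d r (fun k => r * (α k : ℝ)) x -
             w α * tentR d r (fun k => r * (α k : ℝ)) y)|
        ≤ ∑ α ∈ box (fun k => x k / r) 2,
            |w α * tentR d r (fun k => r * (α k : ℝ)) x -
             w α * tentR d r (fun k => r * (α k : ℝ)) y| := Finset.abs_sum_le_sum_abs _ _
      _ ≤ ∑ _α ∈ box (fun k => x k / r) 2, M * (2 * (dist x y / r)) := by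
          apply Finset.sum_le_sum
          intro α _
          rw [← mul_sub, abs_mul]
          apply mul_le_mul (hM α) ?_ (abs_nonneg _) hM0
          rw [tentR, tentR, harg, harg, tent_eq_gtent hd, tent_eq_gtent hd]
          apply gtent_sub_le hd
          intro k
          have := hcoord k
          calc |(x k / r - (α k : ℝ)) - (y k / r - (α k : ℝ))| = |x k / r - y k / r| := by
                congr 1; ring
            _ ≤ dist x y / r := hcoord k
      _ = (2 * 5 ^ d * M * dist x y) / r := by
          rw [Finset.sum_const, card_box, nsmul_eq_mul]
          have h5 : (((2 * 2 + 1 : ℕ) ^ d : ℕ) : ℝ) = 5 ^ d := by push_cast; norm_num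
          rw [h5]
          ring
      _ ≤ (2 * 3 ^ d * M + 2 * 5 ^ d * M) / r * dist x y := by
          rw [div_mul_eq_mul_div]
          gcongr
          have h3 : (0:ℝ) ≤ 2 * 3 ^ d * M := by positivity
          linarith
  · -- far case
    calc dist (uFun d r w x) (uFun d r w y)
        ≤ |uFun d r w x| + |uFun d r w y| := by
          rw [Real.dist_eq]; exact (abs_sub _ _).trans_eq rfl
      _ ≤ 3 ^ d * M + 3 ^ d * M := add_le_add (uFun_bound hd hr hM x) (uFun_bound hd hr hM y)
      _ ≤ (2 * 3 ^ d * M + 2 * 5 ^ d * M) / r * dist x y := by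
          rw [div_mul_eq_mul_div, le_div_iff₀ hr]
          have h3 : (0:ℝ) ≤ 2 * 3 ^ d * M := by positivity
          have h5 : (0:ℝ) ≤ 2 * 5 ^ d * M * dist x y := by positivity
          have hmul := mul_le_mul_of_nonneg_left hfar.le h3
          linarith
  
end lip


section deriv

lemma fract_prm_antitone (z : Fin d → ℝ) {a b : Fin d} (hab : a ≤ b) :
    Int.fract (z ((prm z) b)) ≤ Int.fract (z ((prm z) a)) := by
  have hchain := frac_mem_Dset_prm z
  rw [mem_Dset_iff] at hchain
  have := hchain.2.monotone hab
  rw [Function.comp_apply, Function.comp_apply, key, key, Prod.Lex.le_iff] at this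
  rcases this with h' | ⟨h', _⟩
  · have h''' : -Int.fract (z (prm z a)) < -Int.fract (z (prm z b)) := h'; linarith [h''']
  · have h'' : Int.fract (z (prm z a)) = Int.fract (z (prm z b)) := by
      have := congrArg Neg.neg h'
      simpa using this
    linarith [h''.le]

/-- The derivative of `Hfun σ ι` in direction `e_i`. -/
noncomputable def Dval (σ : Equiv.Perm (Fin d)) (i : Fin d) (ι : Fin (d + 1)) : ℝ :=
  (if h : (ι : ℕ) = 0 then 0
    else if σ ⟨(ι : ℕ) - 1, by have := ι.isLt; omega⟩ = i then 1 else 0) -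
  (if h : (ι : ℕ) < d then (if σ ⟨(ι : ℕ), h⟩ = i then 1 else 0) else 0)

lemma Hfun_shift (σ : Equiv.Perm (Fin d)) (ι : Fin (d + 1)) (i : Fin d)
    (p : Fin d → ℝ) (s : ℝ) :
    Hfun d σ ι (fun k => p k + s * (if k = i then 1 else 0)) =
      Hfun d σ ι p + s * Dval σ i ι := by
  rw [Hfun, Hfun, Dval]
  split_ifs <;> ring

lemma vertZ_succ (σ : Equiv.Perm (Fin d)) (i : Fin d) (k : Fin d) :
    vertZ d σ ((σ.symm i).succ) k =
      vertZ d σ ((σ.symm i).castSucc) k + (if k = i then 1 else 0) := by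
  rw [vertZ, vertZ]
  rcases eq_or_ne k i with rfl | hne
  · rw [if_pos rfl, Fin.val_succ, Fin.coe_castSucc]
    rw [if_pos (by omega), if_neg (lt_irrefl _)]
    omega
  · rw [if_neg hne]
    have hsy : ((σ.symm k : ℕ)) ≠ ((σ.symm i : ℕ)) :=
      fun h => hne (by simpa using congrArg σ (Fin.ext h : σ.symm k = σ.symm i))
    rw [Fin.val_succ, Fin.coe_castSucc]
    split_ifs with h1 h2 h2 <;> omega

lemma sum_Dval (w' : Fin (d + 1) → ℝ) (σ : Equiv.Perm (Fin d)) (i : Fin d) :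
    ∑ ι : Fin (d + 1), w' ι * Dval σ i ι =
      w' ((σ.symm i).succ) - w' ((σ.symm i).castSucc) := by
  simp only [Dval, mul_sub]
  rw [Finset.sum_sub_distrib]
  congr 1
  · rw [Finset.sum_eq_single ((σ.symm i).succ)]
    · have hcond : σ ⟨((σ.symm i).succ : ℕ) - 1, by rw [Fin.val_succ]; have := (σ.symm i).isLt; omega⟩ = i := by
        rw [Equiv.apply_eq_iff_eq_symm_apply]
        exact Fin.ext (by simp [Fin.val_succ])
      rw [dif_neg (by simp [Fin.val_succ]), if_pos hcond, mul_one]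
    · intro ι _ hne
      by_cases h0 : (ι : ℕ) = 0
      · rw [dif_pos h0, mul_zero]
      · rw [dif_neg h0]
        rw [if_neg, mul_zero]
        intro heq
        apply hne
        have h1 : (⟨(ι : ℕ) - 1, by have := ι.isLt; omega⟩ : Fin d) = σ.symm i :=
          (Equiv.eq_symm_apply σ).mpr heq
        have hval := congrArg Fin.val h1
        simp only [Fin.val_mk] at hval
        apply Fin.ext
        rw [Fin.val_succ]
        omega
    · intro h; exact absurd (Finset.mem_univ _) h
  · rw [Finset.sum_eq_single ((σ.symm i).castSucc)]
    · have hlt : (((σ.symm i).castSucc : Fin (d + 1)) : ℕ) < d := by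
        simpa using (σ.symm i).isLt
      have hcond : σ ⟨(((σ.symm i).castSucc : Fin (d + 1)) : ℕ), hlt⟩ = i := by
        rw [Equiv.apply_eq_iff_eq_symm_apply]
        exact Fin.ext (by simp)
      rw [dif_pos hlt, if_pos hcond, mul_one]
    · intro ι _ hne
      by_cases hd' : (ι : ℕ) < d
      · rw [dif_pos hd']
        rw [if_neg, mul_zero]
        intro heq
        apply hne
        have h1 : (⟨(ι : ℕ), hd'⟩ : Fin d) = σ.symm i :=
          (Equiv.eq_symm_apply σ).mpr heq
        have hval := congrArg Fin.val h1
        simp only [Fin.val_mk] at hval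
        apply Fin.ext
        rw [Fin.coe_castSucc]
        omega
      · rw [dif_neg hd', mul_zero]
    · intro h; exact absurd (Finset.mem_univ _) h

lemma hasLineDerivAt_uFun (hd : 0 < d) {r : ℝ} (hr : 0 < r) (w : (Fin d → ℤ) → ℝ)
    (i : Fin d) (x : Fin d → ℝ)
    (hx1 : ∀ k l : Fin d, k ≠ l → Int.fract (x k / r) ≠ Int.fract (x l / r))
    (hx2 : ∀ k, Int.fract (x k / r) ≠ 0) :
    HasLineDerivAt ℝ (uFun d r w) (vFun d r w i x) x (Pi.single i 1) := by
  classical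
  set σ : Equiv.Perm (Fin d) := prm (fun k => x k / r) with hσ
  set β : Fin d → ℤ := fun k => ⌊x k / r⌋ with hβ
  set v : Fin d → ℝ := Pi.single i 1 with hv
  have hfr : ∀ (y : Fin d → ℝ) (k : Fin d), y k / r - ((⌊y k / r⌋ : ℤ) : ℝ) = Int.fract (y k / r) :=
    fun y k => (Int.self_sub_floor _)
  -- the cell is stable in a neighborhood of x
  have hev : ∀ᶠ y in nhds x, (∀ k, 0 < y k / r - ((β k : ℤ) : ℝ) ∧ y k / r - ((β k : ℤ) : ℝ) < 1) ∧
      (∀ a b : Fin d, (a : ℕ) + 1 = (b : ℕ) →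
        y (σ b) / r - ((β (σ b) : ℤ) : ℝ) < y (σ a) / r - ((β (σ a) : ℤ) : ℝ)) := by
    rw [Filter.eventually_and]
    constructor
    · rw [Filter.eventually_all]
      intro k
      rw [Filter.eventually_and]
      have hck : Filter.Tendsto (fun y : Fin d → ℝ => y k / r - ((β k : ℤ) : ℝ)) (nhds x)
          (nhds (x k / r - ((β k : ℤ) : ℝ))) :=
        (((continuous_apply k).div_const r).sub continuous_const).tendsto x
      constructor
      · apply Filter.Tendsto.eventually_lt tendsto_const_nhds hck
        rw [hβ, hfr]
        exact lt_of_le_of_ne (Int.fract_nonneg _) (Ne.symm (hx2 k))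
      · apply Filter.Tendsto.eventually_lt hck tendsto_const_nhds
        rw [hβ, hfr]
        exact Int.fract_lt_one _
    · rw [Filter.eventually_all]
      intro a
      rw [Filter.eventually_all]
      intro b
      by_cases hab : (a : ℕ) + 1 = (b : ℕ)
      · have hc1 : Filter.Tendsto (fun y : Fin d → ℝ => y (σ b) / r - ((β (σ b) : ℤ) : ℝ)) (nhds x)
            (nhds (x (σ b) / r - ((β (σ b) : ℤ) : ℝ))) :=
          (((continuous_apply _).div_const r).sub continuous_const).tendsto x
        have hc2 : Filter.Tendsto (fun y : Fin d → ℝ => y (σ a) / r - ((β (σ a) : ℤ) : ℝ)) (nhds x)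
            (nhds (x (σ a) / r - ((β (σ a) : ℤ) : ℝ))) :=
          (((continuous_apply _).div_const r).sub continuous_const).tendsto x
        have hlt : x (σ b) / r - ((β (σ b) : ℤ) : ℝ) < x (σ a) / r - ((β (σ a) : ℤ) : ℝ) := by
          rw [hβ, hfr, hfr]
          have hab' : a ≤ b := by
            rw [Fin.le_def, ← hab]
            omega
          refine lt_of_le_of_ne (fract_prm_antitone (fun k => x k / r) hab') ?_
          apply hx1
          exact σ.injective.ne (Fin.ne_of_val_ne (by omega))
        filter_upwards [Filter.Tendsto.eventually_lt hc1 hc2 hlt] with y hy _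
        exact hy
      · filter_upwards with y hy
        exact absurd hy hab
  have hstab : ∀ᶠ y in nhds x, uFun d r w y =
      ∑ ι : Fin (d + 1), w (fun k => β k + vertZ d σ ι k) *
        Hfun d σ ι (fun k => y k / r - ((β k : ℤ) : ℝ)) := by
    filter_upwards [hev] with y hy
    have hmem : (fun k => (y k / r) - ((β k : ℤ) : ℝ)) ∈ Dset d σ := by
      constructor
      · intro j; exact ⟨(hy.1 (σ j)).1.le, (hy.1 (σ j)).2⟩
      · intro a b hab
        have := hy.2 a b hab
        split
        · exact this
        · exact this.le
    have hcell := cell_mem_iff.mp hmem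
    have hσy : prm (fun k => y k / r) = σ := hcell.2.symm
    have hβy : ∀ k, ⌊y k / r⌋ = β k := fun k => (hcell.1 k).symm
    rw [uFun_eq hr.ne' w y]
    apply Finset.sum_congr rfl
    intro ι _
    congr 1
    · congr 1
      funext k
      rw [node, hσy, hβy]
    · rw [hσy]
      congr 1
      funext k
      rw [Int.fract, hβy]
  -- the affine formula along the line
  have hcont : Filter.Tendsto (fun t : ℝ => x + t • v) (nhds 0) (nhds x) := by
    have : Continuous (fun t : ℝ => x + t • v) :=
      continuous_const.add (continuous_id.smul continuous_const)
    simpa using this.tendsto 0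
  have hux : uFun d r w x =
      ∑ ι : Fin (d + 1), w (fun k => β k + vertZ d σ ι k) *
        Hfun d σ ι (fun k => x k / r - ((β k : ℤ) : ℝ)) := hstab.self_of_nhds
  have hvx : vFun d r w i x = (1 / r) *
      (w (fun k => β k + vertZ d σ ((σ.symm i).succ) k) -
       w (fun k => β k + vertZ d σ ((σ.symm i).castSucc) k)) := by
    have e1 : (fun k => node (fun j => x j / r)
          (((prm (fun j => x j / r)).symm i).castSucc) k + (if k = i then (1 : ℤ) else 0))
        = fun k => β k + vertZ d σ ((σ.symm i).succ) k := by
      funext k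
      have hβk : ⌊x k / r⌋ = β k := rfl
      simp only [node, ← hσ, hβk, vertZ_succ]
      try ring
    have e2 : node (fun j => x j / r) (((prm (fun j => x j / r)).symm i).castSucc)
        = fun k => β k + vertZ d σ ((σ.symm i).castSucc) k := by
      funext k
      have hβk : ⌊x k / r⌋ = β k := rfl
      simp only [node, ← hσ, hβk]
    rw [vFun_eq hr.ne' w i x, e1, e2]
  have hline : ∀ᶠ t in nhds (0 : ℝ), uFun d r w (x + t • v) =
      uFun d r w x + t * vFun d r w i x := by
    filter_upwards [hcont.eventually hstab] with t ht
    have harg : (fun k => (x + t • v) k / r - ((β k : ℤ) : ℝ)) =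
        fun k => (x k / r - ((β k : ℤ) : ℝ)) + (t / r) * (if k = i then 1 else 0) := by
      funext k
      simp only [Pi.add_apply, Pi.smul_apply, smul_eq_mul, hv, Pi.single_apply]
      split_ifs <;> field_simp <;> ring
    rw [ht, harg]
    have hHs : ∀ ι : Fin (d + 1),
        Hfun d σ ι (fun k => (x k / r - ((β k : ℤ) : ℝ)) + (t / r) * (if k = i then 1 else 0)) =
        Hfun d σ ι (fun k => x k / r - ((β k : ℤ) : ℝ)) + (t / r) * Dval σ i ι :=
      fun ι => Hfun_shift σ ι i _ _
    simp only [hHs]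
    simp only [mul_add]
    rw [Finset.sum_add_distrib]
    have hDsum : ∑ ι : Fin (d + 1), w (fun k => β k + vertZ d σ ι k) * Dval σ i ι =
        w (fun k => β k + vertZ d σ ((σ.symm i).succ) k) -
        w (fun k => β k + vertZ d σ ((σ.symm i).castSucc) k) :=
      sum_Dval (fun ι => w (fun k => β k + vertZ d σ ι k)) σ i
    have h2 : ∑ ι : Fin (d + 1), w (fun k => β k + vertZ d σ ι k) * ((t / r) * Dval σ i ι)
        = (t / r) * ∑ ι : Fin (d + 1), w (fun k => β k + vertZ d σ ι k) * Dval σ i ι := by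
      rw [Finset.mul_sum]
      exact Finset.sum_congr rfl fun ι _ => by ring
    rw [h2, hDsum, hux, hvx]
    ring
  have haff : HasDerivAt (fun t : ℝ => uFun d r w x + t * vFun d r w i x)
      (vFun d r w i x) 0 := by
    simpa using ((hasDerivAt_id (0 : ℝ)).mul_const (vFun d r w i x)).const_add (uFun d r w x)
  show HasDerivAt (fun t => uFun d r w (x + t • v)) (vFun d r w i x) 0
  apply haff.congr_of_eventuallyEq
  filter_upwards [hline] with t ht
  exact ht

end deriv


section null

open MeasureTheory

lemma null_level (L : (Fin d → ℝ) →ₗ[ℝ] ℝ) (u0 : Fin d → ℝ) (hL : L u0 ≠ 0) (c : ℝ) :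
    volume {x : Fin d → ℝ | L x = c} = 0 := by
  have hker : LinearMap.ker L ≠ ⊤ := by
    intro h
    apply hL
    have hu : u0 ∈ LinearMap.ker L := by rw [h]; trivial
    simpa using hu
  have hLx0 : L ((c / L u0) • u0) = c := by
    rw [_root_.map_smul, smul_eq_mul]
    field_simp
  have hset : {x : Fin d → ℝ | L x = c} =
      (fun y => y + (-((c / L u0) • u0))) ⁻¹' (LinearMap.ker L : Set (Fin d → ℝ)) := by
    ext y
    simp only [Set.mem_setOf_eq, Set.mem_preimage, SetLike.mem_coe, LinearMap.mem_ker, map_add,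
      map_neg, hLx0]
    constructor
    · intro h; rw [h]; ring
    · intro h; linarith
  rw [hset, measure_preimage_add_right]
  exact Measure.addHaar_submodule volume _ hker

lemma ae_good {r : ℝ} (hr : 0 < r) :
    ∀ᵐ x : Fin d → ℝ, (∀ k l : Fin d, k ≠ l → Int.fract (x k / r) ≠ Int.fract (x l / r)) ∧
      (∀ k, Int.fract (x k / r) ≠ 0) := by
  have hA : ∀ᵐ x : Fin d → ℝ, ∀ k l : Fin d, k ≠ l →
      Int.fract (x k / r) ≠ Int.fract (x l / r) := by
    rw [ae_all_iff]
    intro k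
    rw [ae_all_iff]
    intro l
    by_cases hkl : k = l
    · exact ae_of_all _ (fun x h => absurd hkl h)
    · have hne : ∀ᵐ x : Fin d → ℝ, Int.fract (x k / r) ≠ Int.fract (x l / r) := by
        rw [ae_iff]
        have hnull : volume (⋃ n : ℤ, {x : Fin d → ℝ | x k - x l = r * n}) = 0 := by
          apply measure_iUnion_null
          intro n
          set Lkl : (Fin d → ℝ) →ₗ[ℝ] ℝ :=
            (LinearMap.proj k : (Fin d → ℝ) →ₗ[ℝ] ℝ) -
              (LinearMap.proj l : (Fin d → ℝ) →ₗ[ℝ] ℝ) with hLkl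
          have hset : {x : Fin d → ℝ | x k - x l = r * n} =
              {x : Fin d → ℝ | Lkl x = r * n} := by
            ext y
            rw [Set.mem_setOf_eq, Set.mem_setOf_eq, hLkl, LinearMap.sub_apply]
            simp [LinearMap.proj_apply]
          rw [hset]
          apply null_level Lkl (Pi.single k 1) _ (r * n)
          rw [hLkl, LinearMap.sub_apply]
          simp only [LinearMap.proj_apply]
          rw [Pi.single_eq_same, Pi.single_eq_of_ne (Ne.symm hkl)]
          norm_num
        apply measure_mono_null ?_ hnull
        · intro x hx
          simp only [Set.mem_setOf_eq, not_not] at hx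
          apply Set.mem_iUnion.mpr ⟨⌊x k / r⌋ - ⌊x l / r⌋, ?_⟩
          have h1 : x k / r - ((⌊x k / r⌋ : ℤ) : ℝ) = Int.fract (x k / r) := Int.self_sub_floor _
          have h2 : x l / r - ((⌊x l / r⌋ : ℤ) : ℝ) = Int.fract (x l / r) := Int.self_sub_floor _
          show x k - x l = r * ((⌊x k / r⌋ - ⌊x l / r⌋ : ℤ) : ℝ)
          have h3 : x k / r - x l / r = ((⌊x k / r⌋ - ⌊x l / r⌋ : ℤ) : ℝ) := by
            push_cast
            rw [← h1, ← h2] at hx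
            linarith
          rw [← h3]
          field_simp
      filter_upwards [hne] with x hx _
      exact hx
  have hB : ∀ᵐ x : Fin d → ℝ, ∀ k : Fin d, Int.fract (x k / r) ≠ 0 := by
    rw [ae_all_iff]
    intro k
    rw [ae_iff]
    have hnull : volume (⋃ n : ℤ, {x : Fin d → ℝ | x k = r * n}) = 0 := by
      apply measure_iUnion_null
      intro n
      have hset : {x : Fin d → ℝ | x k = r * n} =
          {x : Fin d → ℝ | (LinearMap.proj k : (Fin d → ℝ) →ₗ[ℝ] ℝ) x = r * n} := by
        ext y
        simp
      rw [hset]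
      apply null_level _ (Pi.single k 1) _ (r * n)
      simp only [LinearMap.proj_apply]
      rw [Pi.single_eq_same]
      norm_num
    apply measure_mono_null ?_ hnull
    · intro x hx
      simp only [Set.mem_setOf_eq, not_not] at hx
      apply Set.mem_iUnion.mpr ⟨⌊x k / r⌋, ?_⟩
      have h1 : x k / r - ((⌊x k / r⌋ : ℤ) : ℝ) = Int.fract (x k / r) := Int.self_sub_floor _
      show x k = r * ((⌊x k / r⌋ : ℤ) : ℝ)
      have h3 : x k / r = ((⌊x k / r⌋ : ℤ) : ℝ) := by
        rw [hx] at h1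
        linarith
      rw [← h3]
      field_simp
  exact hA.and hB

end null

end CFK

/-- For bounded `w : rℤ^d → ℝ` and `u = Σ_α w_α χ_r^α`, the function `vFun i` is a
version of the `i`-th weak partial derivative of `u`: integration by parts against
every smooth compactly supported test function holds. -/
theorem stmt11 (d : ℕ) (hd : 2 ≤ d) (r : ℝ) (hr : 0 < r)
    (w : (Fin d → ℤ) → ℝ) (hw : ∃ M, ∀ α, |w α| ≤ M) (i : Fin d) :
    ∀ φ : (Fin d → ℝ) → ℝ, ContDiff ℝ (⊤ : ℕ∞) φ → HasCompactSupport φ →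
      ∫ x : Fin d → ℝ, uFun d r w x * fderiv ℝ φ x (Pi.single i 1) =
        - ∫ x : Fin d → ℝ, vFun d r w i x * φ x := by
  intro φ hφ hφc
  obtain ⟨M, hM⟩ := hw
  have hd0 : 0 < d := by omega
  have hu := CFK.uFun_lip hd0 hr hM
  have hφd : Differentiable ℝ φ := hφ.differentiable (by simp)
  obtain ⟨Cφ, hCφ⟩ :=
    (hφc.fderiv (𝕜 := ℝ)).exists_bound_of_continuous (hφ.continuous_fderiv (by simp))
  have hφlip : LipschitzWith ⟨max Cφ 0, le_max_right _ _⟩ φ := by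
    apply lipschitzWith_of_nnnorm_fderiv_le hφd
    intro y
    change ‖fderiv ℝ φ y‖ ≤ max Cφ 0
    exact (hCφ y).trans (le_max_left _ _)
  have IBP := LipschitzWith.integral_lineDeriv_mul_eq (μ := MeasureTheory.volume)
    hu hφlip hφc (Pi.single i 1)
  have h1 : ∫ x : Fin d → ℝ, lineDeriv ℝ (uFun d r w) x (Pi.single i 1) * φ x
      = ∫ x : Fin d → ℝ, vFun d r w i x * φ x := by
    apply MeasureTheory.integral_congr_ae
    filter_upwards [CFK.ae_good (d := d) hr] with x hx
    rw [(CFK.hasLineDerivAt_uFun hd0 hr w i x hx.1 hx.2).lineDeriv]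
  have h3 : ∫ x : Fin d → ℝ, lineDeriv ℝ φ x (-(Pi.single i 1)) * uFun d r w x
      = - ∫ x : Fin d → ℝ, uFun d r w x * fderiv ℝ φ x (Pi.single i 1) := by
    rw [← MeasureTheory.integral_neg]
    apply MeasureTheory.integral_congr_ae
    apply Filter.Eventually.of_forall
    intro x
    show lineDeriv ℝ φ x (-Pi.single i 1) * uFun d r w x
        = -(uFun d r w x * fderiv ℝ φ x (Pi.single i 1))
    rw [(hφd x).lineDeriv_eq_fderiv, map_neg]
    ring
  rw [h1, h3] at IBP
  linarith [IBP]
end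

section
/- Let H_N (N ∈ ℕ ∪ {∞}) be a sequence of Hilbert spaces converging to H_∞ in the Kuwae–Shioya sense. Then for every u ∈ H_∞ there exists a strongly convergent section (u_N) with u_∞ = u; every weakly convergent section satisfies ‖u_∞‖_∞ ≤ liminf_N ‖u_N‖_N with finite right-hand side; and every section with ‖u_N‖_N ≤ 1 for all N has a weakly convergent subsection. -/
open Filter

variable {H : ℕ → Type*} [∀ n, NormedAddCommGroup (H n)]
  [∀ n, InnerProductSpace ℝ (H n)]
  {Hoo : Type*} [NormedAddCommGroup Hoo] [InnerProductSpace ℝ Hoo]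

/-- Strong convergence of a section `(u_N)` in a Kuwae–Shioya sequence of
converging Hilbert spaces with identification maps `Ψ_N : 𝒞 → H_N`. -/
def StrongConv (C : Submodule ℝ Hoo) (Ψ : ∀ n, C →ₗ[ℝ] H n)
    (u : ∀ n, H n) (uoo : Hoo) : Prop :=
  (∀ φ : C, Tendsto (fun n => (inner ℝ (u n) (Ψ n φ) : ℝ)) atTop
      (nhds (inner ℝ uoo (φ : Hoo) : ℝ))) ∧
  Tendsto (fun n => ‖u n‖) atTop (nhds ‖uoo‖)

/-- Weak convergence of a section: testing against all strongly convergent sections. -/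
def WeakConv (C : Submodule ℝ Hoo) (Ψ : ∀ n, C →ₗ[ℝ] H n)
    (u : ∀ n, H n) (uoo : Hoo) : Prop :=
  ∀ (v : ∀ n, H n) (voo : Hoo), StrongConv C Ψ v voo →
    Tendsto (fun n => (inner ℝ (u n) (v n) : ℝ)) atTop (nhds (inner ℝ uoo voo : ℝ))

lemma polar {E : Type*} [NormedAddCommGroup E] [InnerProductSpace ℝ E] (x y : E) :
    (inner ℝ x y : ℝ) = ((inner ℝ (x+y) (x+y) : ℝ) - inner ℝ x x - inner ℝ y y)/2 := by
  rw [real_inner_add_add_self]; ring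

lemma KSnorm (C : Submodule ℝ Hoo) (Ψ : ∀ n, C →ₗ[ℝ] H n)
    (hΨ : ∀ φ : C, Tendsto (fun n => (inner ℝ (Ψ n φ) (Ψ n φ) : ℝ)) atTop
      (nhds (inner ℝ (φ : Hoo) (φ : Hoo) : ℝ))) (φ : C) :
    Tendsto (fun n => ‖Ψ n φ‖) atTop (nhds ‖(φ : Hoo)‖) := by
  have h := (Real.continuous_sqrt.tendsto _).comp (hΨ φ)
  simpa [Function.comp_def, real_inner_self_eq_norm_mul_norm,
    Real.sqrt_mul_self (norm_nonneg _)] using h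

lemma KSinner (C : Submodule ℝ Hoo) (Ψ : ∀ n, C →ₗ[ℝ] H n)
    (hΨ : ∀ φ : C, Tendsto (fun n => (inner ℝ (Ψ n φ) (Ψ n φ) : ℝ)) atTop
      (nhds (inner ℝ (φ : Hoo) (φ : Hoo) : ℝ))) (φ ψ : C) :
    Tendsto (fun n => (inner ℝ (Ψ n φ) (Ψ n ψ) : ℝ)) atTop
      (nhds (inner ℝ (φ : Hoo) (ψ : Hoo) : ℝ)) := by
  have h := (((hΨ (φ+ψ)).sub (hΨ φ)).sub (hΨ ψ)).div_const (2:ℝ)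
  simp only [map_add, Submodule.coe_add] at h
  have e1 : (fun n => (inner ℝ (Ψ n φ) (Ψ n ψ) : ℝ)) = fun n =>
      ((inner ℝ (Ψ n φ + Ψ n ψ) (Ψ n φ + Ψ n ψ) : ℝ) - inner ℝ (Ψ n φ) (Ψ n φ)
        - inner ℝ (Ψ n ψ) (Ψ n ψ))/2 := by
    funext n; exact polar _ _
  rw [e1, polar (φ : Hoo) ψ]
  exact h

lemma KSexists (C : Submodule ℝ Hoo) (hC : Dense (C : Set Hoo)) (Ψ : ∀ n, C →ₗ[ℝ] H n)
    (hΨ : ∀ φ : C, Tendsto (fun n => (inner ℝ (Ψ n φ) (Ψ n φ) : ℝ)) atTop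
      (nhds (inner ℝ (φ : Hoo) (φ : Hoo) : ℝ))) (uoo : Hoo) :
    ∃ u : ∀ n, H n, StrongConv C Ψ u uoo := by
  classical
  -- approximating sequence in C
  have hφex : ∀ k : ℕ, ∃ φ : C, ‖(φ : Hoo) - uoo‖ < 1/(k+1) := by
    intro k
    have hpos : (0:ℝ) < 1/(k+1) := by positivity
    obtain ⟨b, hb, hdist⟩ := Metric.mem_closure_iff.1 (hC uoo) _ hpos
    exact ⟨⟨b, hb⟩, by rwa [dist_eq_norm, norm_sub_rev] at hdist⟩
  choose φ hφ using hφex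
  -- the eventual approximation property
  set Q : ℕ → ℕ → Prop := fun k n =>
    (∀ i ≤ k, ∀ j ≤ k, ‖Ψ n (φ i) - Ψ n (φ j)‖ ≤ ‖(φ i : Hoo) - (φ j : Hoo)‖ + 1/(k+1)) ∧
    (∀ i ≤ k, |‖Ψ n (φ i)‖ - ‖(φ i : Hoo)‖| ≤ 1/(k+1)) with hQdef
  have hQ : ∀ k, ∀ᶠ n in atTop, Q k n := by
    intro k
    have hpos : (0:ℝ) < 1/(k+1) := by positivity
    have h1 : ∀ᶠ n in atTop, ∀ i ∈ Finset.range (k+1), ∀ j ∈ Finset.range (k+1),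
        ‖Ψ n (φ i) - Ψ n (φ j)‖ ≤ ‖(φ i : Hoo) - (φ j : Hoo)‖ + 1/(k+1) := by
      rw [eventually_all_finset]
      intro i _
      rw [eventually_all_finset]
      intro j _
      have h := KSnorm C Ψ hΨ (φ i - φ j)
      have hlt : ‖((φ i - φ j : C) : Hoo)‖ < ‖(φ i : Hoo) - (φ j : Hoo)‖ + 1/(k+1) := by
        simp only [Submodule.coe_sub]
        linarith
      filter_upwards [h.eventually_lt_const hlt] with n hn
      have : Ψ n (φ i - φ j) = Ψ n (φ i) - Ψ n (φ j) := map_sub _ _ _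
      rw [this] at hn
      exact hn.le
    have h2 : ∀ᶠ n in atTop, ∀ i ∈ Finset.range (k+1),
        |‖Ψ n (φ i)‖ - ‖(φ i : Hoo)‖| ≤ 1/(k+1) := by
      rw [eventually_all_finset]
      intro i _
      have h := KSnorm C Ψ hΨ (φ i)
      have := h.eventually (Metric.ball_mem_nhds _ hpos)
      filter_upwards [this] with n hn
      rw [Real.dist_eq] at hn
      exact hn.le
    filter_upwards [h1, h2] with n hn1 hn2
    exact ⟨fun i hi j hj => hn1 i (Finset.mem_range.2 (Nat.lt_succ_of_le hi))
        j (Finset.mem_range.2 (Nat.lt_succ_of_le hj)),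
      fun i hi => hn2 i (Finset.mem_range.2 (Nat.lt_succ_of_le hi))⟩
  -- thresholds
  have hNex : ∀ k, ∃ N, ∀ n ≥ N, Q k n := fun k => eventually_atTop.1 (hQ k)
  choose N hN using hNex
  set M : ℕ → ℕ := fun k => Nat.rec (N 0) (fun k ih => max (N (k+1)) (ih + 1)) k with hMdef
  have hMmono : StrictMono M := by
    apply strictMono_nat_of_lt_succ
    intro k
    have : M k + 1 ≤ M (k+1) := le_max_right _ _
    omega
  have hNM : ∀ k, N k ≤ M k := by
    intro k; cases k with
    | zero => exact le_refl _
    | succ k => exact le_max_left _ _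
  have hQM : ∀ k n, M k ≤ n → Q k n := fun k n h => hN k n (le_trans (hNM k) h)
  set K : ℕ → ℕ := fun n => Nat.findGreatest (fun k => M k ≤ n) n with hKdef
  have hK1 : ∀ n, M 0 ≤ n → M (K n) ≤ n := by
    intro n hn
    exact Nat.findGreatest_spec (P := fun k => M k ≤ n) (Nat.zero_le n) hn
  have hKge : ∀ m n, M m ≤ n → m ≤ K n :=
    fun m n h => Nat.le_findGreatest (le_trans (hMmono.le_apply) h) h
  have hK2 : Tendsto K atTop atTop :=
    tendsto_atTop_atTop.2 fun m => ⟨M m, fun n hn => hKge m n hn⟩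
  refine ⟨fun n => Ψ n (φ (K n)), ?_, ?_⟩
  · -- inner ℝ products
    intro ψ
    rw [Metric.tendsto_atTop]
    intro ε hε
    have hψpos : (0:ℝ) < 4*(‖(ψ:Hoo)‖+1) := by positivity
    obtain ⟨m, hm⟩ := exists_nat_one_div_lt (show (0:ℝ) < ε/(2*(4*(‖(ψ:Hoo)‖+1))) by positivity)
    -- eventual facts
    have e1 : ∀ᶠ n in atTop, |(inner ℝ (Ψ n (φ m)) (Ψ n ψ) : ℝ) - inner ℝ ((φ m : Hoo)) (ψ:Hoo)| < ε/4 := by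
      have := (KSinner C Ψ hΨ (φ m) ψ).eventually (Metric.ball_mem_nhds _ (by positivity : (0:ℝ) < ε/4))
      filter_upwards [this] with n hn
      rwa [Real.dist_eq] at hn
    have e2 : ∀ᶠ n in atTop, ‖Ψ n ψ‖ ≤ ‖(ψ:Hoo)‖ + 1 := by
      have := (KSnorm C Ψ hΨ ψ).eventually_lt_const (by linarith : ‖(ψ:Hoo)‖ < ‖(ψ:Hoo)‖+1)
      exact this.mono fun n hn => hn.le
    have e3 : ∀ᶠ n in atTop, M m ≤ n := eventually_ge_atTop _
    have e4 : ∀ᶠ n in atTop, M 0 ≤ n := eventually_ge_atTop _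
    rw [eventually_atTop] at e1 e2 e3 e4
    obtain ⟨N1, hN1⟩ := e1; obtain ⟨N2, hN2⟩ := e2; obtain ⟨N3, hN3⟩ := e3
    obtain ⟨N4, hN4⟩ := e4
    refine ⟨max (max N1 N2) (max N3 N4), fun n hn => ?_⟩
    have hn1 := hN1 n (le_trans (le_trans (le_max_left _ _) (le_max_left _ _)) hn)
    have hn2 := hN2 n (le_trans (le_trans (le_max_right _ _) (le_max_left _ _)) hn)
    have hn3 := hN3 n (le_trans (le_trans (le_max_left _ _) (le_max_right _ _)) hn)
    have hn4 := hN4 n (le_trans (le_trans (le_max_right _ _) (le_max_right _ _)) hn)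
    have hKnm : m ≤ K n := hKge m n hn3
    have hQn := hQM (K n) n (hK1 n hn4)
    -- the three-term estimate
    have hinv : 1/((K n:ℝ)+1) ≤ 1/((m:ℝ)+1) := by
      apply one_div_le_one_div_of_le (by positivity)
      exact_mod_cast Nat.succ_le_succ hKnm
    have hsub : ‖(φ (K n) : Hoo) - (φ m : Hoo)‖ ≤ 1/((K n:ℝ)+1) + 1/((m:ℝ)+1) := by
      have t1 := hφ (K n)
      have t2 := hφ m
      calc ‖(φ (K n) : Hoo) - (φ m : Hoo)‖
          ≤ ‖(φ (K n) : Hoo) - uoo‖ + ‖uoo - (φ m : Hoo)‖ := norm_sub_le_norm_sub_add_norm_sub _ _ _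
        _ ≤ 1/((K n:ℝ)+1) + 1/((m:ℝ)+1) := by
            rw [norm_sub_rev uoo]
            exact add_le_add t1.le t2.le
    have hterm1 : |(inner ℝ (Ψ n (φ (K n)) - Ψ n (φ m)) (Ψ n ψ) : ℝ)|
        ≤ (3/((m:ℝ)+1)) * (‖(ψ:Hoo)‖+1) := by
      calc |(inner ℝ (Ψ n (φ (K n)) - Ψ n (φ m)) (Ψ n ψ) : ℝ)|
          ≤ ‖Ψ n (φ (K n)) - Ψ n (φ m)‖ * ‖Ψ n ψ‖ := abs_real_inner_le_norm _ _
        _ ≤ (3/((m:ℝ)+1)) * (‖(ψ:Hoo)‖+1) := by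
            apply mul_le_mul _ hn2 (norm_nonneg _) (by positivity)
            have := hQn.1 (K n) (le_refl _) m hKnm
            calc ‖Ψ n (φ (K n)) - Ψ n (φ m)‖
                ≤ ‖(φ (K n) : Hoo) - (φ m : Hoo)‖ + 1/((K n:ℝ)+1) := by exact_mod_cast this
              _ ≤ (1/((K n:ℝ)+1) + 1/((m:ℝ)+1)) + 1/((K n:ℝ)+1) := by linarith
              _ ≤ 3/((m:ℝ)+1) := by
                  have h3 : 3/((m:ℝ)+1) = 1/((m:ℝ)+1)+1/((m:ℝ)+1)+1/((m:ℝ)+1) := by ring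
                  linarith
    have hterm3 : |(inner ℝ ((φ m : Hoo) - uoo) (ψ:Hoo) : ℝ)| ≤ (1/((m:ℝ)+1)) * ‖(ψ:Hoo)‖ := by
      calc |(inner ℝ ((φ m : Hoo) - uoo) (ψ:Hoo) : ℝ)|
          ≤ ‖(φ m : Hoo) - uoo‖ * ‖(ψ:Hoo)‖ := abs_real_inner_le_norm _ _
        _ ≤ (1/((m:ℝ)+1)) * ‖(ψ:Hoo)‖ := by
            apply mul_le_mul_of_nonneg_right (hφ m).le (norm_nonneg _)
    have hdecomp : (inner ℝ (Ψ n (φ (K n))) (Ψ n ψ) : ℝ) - inner ℝ uoo (ψ:Hoo)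
        = (inner ℝ (Ψ n (φ (K n)) - Ψ n (φ m)) (Ψ n ψ) : ℝ)
          + ((inner ℝ (Ψ n (φ m)) (Ψ n ψ) : ℝ) - inner ℝ ((φ m : Hoo)) (ψ:Hoo))
          + (inner ℝ ((φ m : Hoo) - uoo) (ψ:Hoo) : ℝ) := by
      rw [inner_sub_left, inner_sub_left]
      ring
    have hmain : |(inner ℝ (Ψ n (φ (K n))) (Ψ n ψ) : ℝ) - inner ℝ uoo (ψ:Hoo)|
        ≤ (3/((m:ℝ)+1)) * (‖(ψ:Hoo)‖+1) + ε/4 + (1/((m:ℝ)+1)) * ‖(ψ:Hoo)‖ := by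
      rw [hdecomp]
      calc _ ≤ |(inner ℝ (Ψ n (φ (K n)) - Ψ n (φ m)) (Ψ n ψ) : ℝ)|
            + |(inner ℝ (Ψ n (φ m)) (Ψ n ψ) : ℝ) - inner ℝ ((φ m : Hoo)) (ψ:Hoo)|
            + |(inner ℝ ((φ m : Hoo) - uoo) (ψ:Hoo) : ℝ)| := abs_add_three _ _ _
        _ ≤ _ := by
            exact add_le_add (add_le_add hterm1 hn1.le) hterm3
    rw [Real.dist_eq]
    have hmb : (3/((m:ℝ)+1)) * (‖(ψ:Hoo)‖+1) + (1/((m:ℝ)+1)) * ‖(ψ:Hoo)‖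
        ≤ (1/((m:ℝ)+1)) * (4*(‖(ψ:Hoo)‖+1)) := by
      have h0 : (0:ℝ) ≤ 1/((m:ℝ)+1) := by positivity
      have : (3:ℝ)/((m:ℝ)+1) = (1/((m:ℝ)+1))*3 := by ring
      nlinarith [norm_nonneg (ψ:Hoo)]
    have hmb2 : (1/((m:ℝ)+1)) * (4*(‖(ψ:Hoo)‖+1)) < ε/2 := by
      have hne : (4*(‖(ψ:Hoo)‖+1)) ≠ 0 := ne_of_gt hψpos
      have h4 : ε/(2*(4*(‖(ψ:Hoo)‖+1))) * (4*(‖(ψ:Hoo)‖+1)) = ε/2 := by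
        field_simp
      linarith [mul_lt_mul_of_pos_right hm hψpos]
    calc |(inner ℝ (Ψ n (φ (K n))) (Ψ n ψ) : ℝ) - inner ℝ uoo (ψ:Hoo)|
        ≤ (3/((m:ℝ)+1)) * (‖(ψ:Hoo)‖+1) + ε/4 + (1/((m:ℝ)+1)) * ‖(ψ:Hoo)‖ := hmain
      _ < ε := by linarith
  · -- norms
    have hbound : ∀ᶠ n in atTop, |‖Ψ n (φ (K n))‖ - ‖uoo‖| ≤ 2/((K n:ℝ)+1) := by
      filter_upwards [eventually_ge_atTop (M 0)] with n hn
      have hQn := hQM (K n) n (hK1 n hn)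
      have h1 := hQn.2 (K n) (le_refl _)
      have h2 : |‖(φ (K n) : Hoo)‖ - ‖uoo‖| ≤ 1/((K n:ℝ)+1) :=
        le_trans (abs_norm_sub_norm_le _ _) (hφ (K n)).le
      calc |‖Ψ n (φ (K n))‖ - ‖uoo‖|
          ≤ |‖Ψ n (φ (K n))‖ - ‖(φ (K n) : Hoo)‖| + |‖(φ (K n) : Hoo)‖ - ‖uoo‖| :=
            abs_sub_le _ _ _
        _ ≤ 1/((K n:ℝ)+1) + 1/((K n:ℝ)+1) := add_le_add h1 h2
        _ = 2/((K n:ℝ)+1) := by ring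
    have hg : Tendsto (fun n => 2/((K n:ℝ)+1)) atTop (nhds 0) := by
      have base : Tendsto (fun k : ℕ => 2/((k:ℝ)+1)) atTop (nhds 0) := by
        have := tendsto_one_div_add_atTop_nhds_zero_nat (𝕜 := ℝ)
        have h2 := this.const_mul (2:ℝ)
        simpa [one_div, div_eq_mul_inv] using h2
      exact base.comp hK2
    have h0 : Tendsto (fun n => ‖Ψ n (φ (K n))‖ - ‖uoo‖) atTop (nhds 0) := by
      apply squeeze_zero_norm' _ hg
      filter_upwards [hbound] with n hn
      simpa [Real.norm_eq_abs] using hn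
    have := h0.add_const ‖uoo‖
    simpa using this

lemma KSliminf_ne_top (C : Submodule ℝ Hoo) (Ψ : ∀ n, C →ₗ[ℝ] H n)
    (hΨ : ∀ φ : C, Tendsto (fun n => (inner ℝ (Ψ n φ) (Ψ n φ) : ℝ)) atTop
      (nhds (inner ℝ (φ : Hoo) (φ : Hoo) : ℝ)))
    (u : ∀ n, H n) (uoo : Hoo) (hu : WeakConv C Ψ u uoo) :
    Filter.liminf (fun n => (‖u n‖₊ : ENNReal)) atTop ≠ ⊤ := by
  classical
  intro htop
  have hev : ∀ k : ℕ, ∀ᶠ n in atTop, ((k:ℝ)+1)^2 < ‖u n‖ := by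
    intro k
    have hlt : ENNReal.ofReal (((k:ℝ)+1)^2) < liminf (fun n => (‖u n‖₊ : ENNReal)) atTop := by
      rw [htop]; exact ENNReal.ofReal_lt_top
    filter_upwards [eventually_lt_of_lt_liminf hlt] with n hn
    rw [← enorm_eq_nnnorm, ← ofReal_norm,
      ENNReal.ofReal_lt_ofReal_iff_of_nonneg (by positivity)] at hn
    exact hn
  obtain ⟨s, hs, hsval⟩ := extraction_forall_of_eventually hev
  -- the gliding hump section
  set w : ∀ n, H n := fun n =>
    if h : ∃ k, s k = n then (((h.choose : ℝ)+1))⁻¹ • (‖u n‖⁻¹ • u n) else 0 with hwdef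
  have hwnorm : ∀ n, ‖w n‖ ≤ 1 := by
    intro n
    rw [hwdef]
    dsimp only
    split
    · next h =>
      have hpos : (0:ℝ) < ‖u n‖ := by
        have := hsval h.choose
        rw [h.choose_spec] at this
        nlinarith
      simp only [norm_smul, norm_inv, Real.norm_eq_abs, abs_norm]
      rw [inv_mul_cancel₀ (ne_of_gt hpos), mul_one, abs_of_nonneg (by positivity)]
      rw [inv_le_one_iff₀]
      right
      have : (0:ℝ) ≤ (h.choose : ℝ) := Nat.cast_nonneg _
      linarith
    · simp
  have hwsmall : ∀ K : ℕ, ∀ n, s K < n → ‖w n‖ ≤ ((K:ℝ)+1)⁻¹ := by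
    intro K n hn
    rw [hwdef]
    dsimp only
    split
    · next h =>
      have hkK : K < h.choose := by
        by_contra hc
        push_neg at hc
        have := hs.le_iff_le.2 hc
        rw [h.choose_spec] at this
        omega
      have hpos : (0:ℝ) < ‖u n‖ := by
        have := hsval h.choose
        rw [h.choose_spec] at this
        nlinarith
      simp only [norm_smul, norm_inv, Real.norm_eq_abs, abs_norm]
      rw [inv_mul_cancel₀ (ne_of_gt hpos), mul_one, abs_of_nonneg (by positivity)]
      apply inv_anti₀ (by positivity)
      have : (K:ℝ) + 1 ≤ (h.choose : ℝ) := by exact_mod_cast hkK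
      linarith
    · simp; positivity
  have hwnorm0 : Tendsto (fun n => ‖w n‖) atTop (nhds 0) := by
    rw [Metric.tendsto_atTop]
    intro ε hε
    obtain ⟨K, hK⟩ := exists_nat_one_div_lt hε
    refine ⟨s K + 1, fun n hn => ?_⟩
    rw [Real.dist_eq, sub_zero, abs_of_nonneg (norm_nonneg _)]
    calc ‖w n‖ ≤ ((K:ℝ)+1)⁻¹ := hwsmall K n (by omega)
      _ = 1/((K:ℝ)+1) := by rw [one_div]
      _ < ε := hK
  have hwstrong : StrongConv C Ψ w (0 : Hoo) := by
    constructor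
    · intro φ
      have hb : Tendsto (fun n => ‖w n‖ * ‖Ψ n φ‖) atTop (nhds 0) := by
        have := hwnorm0.mul (KSnorm C Ψ hΨ φ)
        simpa using this
      have : Tendsto (fun n => (inner ℝ (w n) (Ψ n φ) : ℝ)) atTop (nhds 0) := by
        apply squeeze_zero_norm _ hb
        intro n
        exact abs_real_inner_le_norm _ _
      simpa using this
    · simpa using hwnorm0
  have hlim := hu w 0 hwstrong
  rw [inner_zero_right] at hlim
  have hsub := hlim.comp hs.tendsto_atTop
  have hev1 : ∀ᶠ k in atTop, |(inner ℝ (u (s k)) (w (s k)) : ℝ)| < 1 := by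
    have := hsub.eventually (Metric.ball_mem_nhds (0:ℝ) one_pos)
    filter_upwards [this] with k hk
    rw [Real.dist_eq, sub_zero] at hk
    exact hk
  obtain ⟨k, hk⟩ := hev1.exists
  -- but inner (u (s k)) (w (s k)) ≥ k+1
  have h1 : ∃ k', s k' = s k := ⟨k, rfl⟩
  have hkc : h1.choose = k := hs.injective h1.choose_spec
  have hpos : (0:ℝ) < ‖u (s k)‖ := by nlinarith [hsval k]
  have hval : (inner ℝ (u (s k)) (w (s k)) : ℝ) = ((k:ℝ)+1)⁻¹ * ‖u (s k)‖ := by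
    rw [hwdef]
    dsimp only
    rw [dif_pos h1, hkc]
    rw [real_inner_smul_right, real_inner_smul_right, real_inner_self_eq_norm_mul_norm]
    field_simp
  rw [hval] at hk
  have hge : ((k:ℝ)+1) ≤ ((k:ℝ)+1)⁻¹ * ‖u (s k)‖ := by
    have h2 := hsval k
    have hp : (0:ℝ) < (k:ℝ)+1 := by positivity
    rw [inv_mul_eq_div, le_div_iff₀ hp]
    nlinarith
  rw [abs_of_nonneg (by positivity)] at hk
  have : (0:ℝ) ≤ (k:ℝ) := Nat.cast_nonneg k
  linarith

lemma KSliminf_le (C : Submodule ℝ Hoo) (hC : Dense (C : Set Hoo)) (Ψ : ∀ n, C →ₗ[ℝ] H n)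
    (hΨ : ∀ φ : C, Tendsto (fun n => (inner ℝ (Ψ n φ) (Ψ n φ) : ℝ)) atTop
      (nhds (inner ℝ (φ : Hoo) (φ : Hoo) : ℝ)))
    (u : ∀ n, H n) (uoo : Hoo) (hu : WeakConv C Ψ u uoo) :
    (‖uoo‖₊ : ENNReal) ≤ Filter.liminf (fun n => (‖u n‖₊ : ENNReal)) atTop := by
  obtain ⟨v, hv⟩ := KSexists C hC Ψ hΨ uoo
  have h1 : Tendsto (fun n => (inner ℝ (u n) (v n) : ℝ)) atTop (nhds (inner ℝ uoo uoo : ℝ)) :=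
    hu v uoo hv
  rw [le_liminf_iff]
  intro y hy
  have hyt : y ≠ ⊤ := ne_top_of_lt hy
  set a : ℝ := y.toReal with hadef
  have ha0 : 0 ≤ a := ENNReal.toReal_nonneg
  have haN : a < ‖uoo‖ := by
    have := (ENNReal.toReal_lt_toReal hyt ENNReal.coe_ne_top).2 hy
    simpa using this
  have hN0 : (0:ℝ) < ‖uoo‖ := lt_of_le_of_lt ha0 haN
  have halim : Tendsto (fun n => a * ‖v n‖) atTop (nhds (a * ‖uoo‖)) :=
    hv.2.const_mul a
  have hlt : a * ‖uoo‖ < (inner ℝ uoo uoo : ℝ) := by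
    rw [real_inner_self_eq_norm_mul_norm]
    exact mul_lt_mul_of_pos_right haN hN0
  have hev1 := halim.eventually_lt h1 hlt
  have hev2 : ∀ᶠ n in atTop, (0:ℝ) < ‖v n‖ := hv.2.eventually_const_lt hN0
  filter_upwards [hev1, hev2] with n hn1 hn2
  have h3 : a * ‖v n‖ < ‖u n‖ * ‖v n‖ :=
    lt_of_lt_of_le hn1 (real_inner_le_norm _ _)
  have h4 : a < ‖u n‖ := lt_of_mul_lt_mul_right h3 (norm_nonneg _)
  calc y = ENNReal.ofReal a := by rw [hadef, ENNReal.ofReal_toReal hyt]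
    _ < ENNReal.ofReal ‖u n‖ := (ENNReal.ofReal_lt_ofReal_iff_of_nonneg ha0).2 h4
    _ = (‖u n‖₊ : ENNReal) := (ofReal_norm _).trans (enorm_eq_nnnorm _)

lemma tendsto_of_eventually_abs_le {f : ℕ → ℝ} {L D : ℝ} (hD : 0 < D)
    (h : ∀ ε > (0:ℝ), ∀ᶠ j in atTop, |f j - L| ≤ D * ε) :
    Tendsto f atTop (nhds L) := by
  rw [Metric.tendsto_atTop]
  intro ε hε
  have h2 := h (ε/(2*D)) (by positivity)
  rw [eventually_atTop] at h2
  obtain ⟨N, hN⟩ := h2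
  refine ⟨N, fun n hn => ?_⟩
  rw [Real.dist_eq]
  have := hN n hn
  have heq : D * (ε/(2*D)) = ε/2 := by
    field_simp
  rw [heq] at this
  linarith


theorem KSweakcompact [CompleteSpace Hoo] [TopologicalSpace.SeparableSpace Hoo]
    (C : Submodule ℝ Hoo) (hC : Dense (C : Set Hoo)) (Ψ : ∀ n, C →ₗ[ℝ] H n)
    (hΨ : ∀ φ : C, Tendsto (fun n => (inner ℝ (Ψ n φ) (Ψ n φ) : ℝ)) atTop
      (nhds (inner ℝ (φ : Hoo) (φ : Hoo) : ℝ)))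
    (u : ∀ n, H n) (hu : ∀ n, ‖u n‖ ≤ 1) :
    ∃ (uoo : Hoo) (k : ℕ → ℕ), StrictMono k ∧
      ∀ (v : ∀ n, H n) (voo : Hoo), StrongConv C Ψ v voo →
        Tendsto (fun j => (inner ℝ (u (k j)) (v (k j)) : ℝ)) atTop
          (nhds (inner ℝ uoo voo : ℝ)) := by
  classical
  -- basic bound
  have habs : ∀ (n : ℕ) (ψ : C), |(inner ℝ (u n) (Ψ n ψ) : ℝ)| ≤ ‖Ψ n ψ‖ := by
    intro n ψ
    calc |(inner ℝ (u n) (Ψ n ψ) : ℝ)| ≤ ‖u n‖ * ‖Ψ n ψ‖ := abs_real_inner_le_norm _ _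
      _ ≤ 1 * ‖Ψ n ψ‖ := mul_le_mul_of_nonneg_right (hu n) (norm_nonneg _)
      _ = ‖Ψ n ψ‖ := one_mul _
  -- countable approximating family in C
  obtain ⟨d, hd⟩ := TopologicalSpace.exists_dense_seq Hoo
  have heex : ∀ p : ℕ × ℕ, ∃ φ : C, ‖(φ : Hoo) - d p.1‖ < 1/(p.2+1) := by
    intro p
    have hpos : (0:ℝ) < 1/(p.2+1) := by positivity
    obtain ⟨b, hb, hdist⟩ := Metric.mem_closure_iff.1 (hC (d p.1)) _ hpos
    exact ⟨⟨b, hb⟩, by rwa [dist_eq_norm, norm_sub_rev] at hdist⟩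
  choose e he using heex
  have hdense : ∀ (x : Hoo) (ε : ℝ), 0 < ε → ∃ p, ‖(e p : Hoo) - x‖ < ε := by
    intro x ε hε
    obtain ⟨m, hm⟩ := hd.exists_dist_lt x (half_pos hε)
    obtain ⟨j, hj⟩ := exists_nat_one_div_lt (half_pos hε)
    refine ⟨(m, j), ?_⟩
    have h1 := he (m, j)
    calc ‖(e (m,j) : Hoo) - x‖ ≤ ‖(e (m,j) : Hoo) - d m‖ + ‖d m - x‖ :=
        norm_sub_le_norm_sub_add_norm_sub _ _ _
      _ < 1/((j:ℝ)+1) + ε/2 := by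
          apply add_lt_add_of_lt_of_le h1
          rw [← dist_eq_norm, dist_comm]
          exact (hm).le
      _ < ε/2 + ε/2 := by
          apply add_lt_add_of_lt_of_le _ (le_refl _)
          exact_mod_cast hj
      _ = ε := by ring
  -- uniform bounds
  have hBex : ∀ p : ℕ × ℕ, ∃ b : ℝ, ∀ n, ‖Ψ n (e p)‖ ≤ b := by
    intro p
    obtain ⟨b, hb⟩ := (KSnorm C Ψ hΨ (e p)).bddAbove_range
    exact ⟨b, fun n => hb (Set.mem_range_self n)⟩
  choose B hB using hBex
  -- compactness extraction
  set g : ℕ → (ℕ × ℕ → ℝ) := fun n p => (inner ℝ (u n) (Ψ n (e p)) : ℝ) with hgdef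
  have hgs : ∀ n, g n ∈ Set.pi Set.univ (fun p => Set.Icc (-(B p)) (B p)) := by
    intro n p _
    have := (habs n (e p)).trans (hB p n)
    rw [abs_le] at this
    exact ⟨this.1, this.2⟩
  obtain ⟨L, _, k, hk, hconv⟩ :=
    (isCompact_univ_pi (fun p => isCompact_Icc)).tendsto_subseq hgs
  have hLp : ∀ p, Tendsto (fun j => g (k j) p) atTop (nhds (L p)) := by
    intro p
    exact (tendsto_pi_nhds.1 hconv) p
  -- limits exist for every φ in C
  have hcauchy : ∀ φ : C, ∃ l : ℝ,
      Tendsto (fun j => (inner ℝ (u (k j)) (Ψ (k j) φ) : ℝ)) atTop (nhds l) := by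
    intro φ
    apply cauchySeq_tendsto_of_complete
    rw [Metric.cauchySeq_iff]
    intro ε hε
    obtain ⟨p, hp⟩ := hdense (φ : Hoo) (ε/4) (by positivity)
    have hsmall : ∀ᶠ n in atTop, ‖Ψ n (e p - φ)‖ < ε/4 := by
      apply (KSnorm C Ψ hΨ (e p - φ)).eventually_lt_const
      simpa using hp
    have hsmallk : ∀ᶠ j in atTop, ‖Ψ (k j) (e p - φ)‖ < ε/4 :=
      hk.tendsto_atTop.eventually hsmall
    have hcp : CauchySeq (fun j => g (k j) p) := (hLp p).cauchySeq
    rw [Metric.cauchySeq_iff] at hcp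
    obtain ⟨N1, hN1⟩ := hcp (ε/4) (by positivity)
    rw [eventually_atTop] at hsmallk
    obtain ⟨N2, hN2⟩ := hsmallk
    refine ⟨max N1 N2, fun m hm n hn => ?_⟩
    have hm1 : m ≥ N1 := le_trans (le_max_left _ _) hm
    have hm2 : m ≥ N2 := le_trans (le_max_right _ _) hm
    have hn1 : n ≥ N1 := le_trans (le_max_left _ _) hn
    have hn2 : n ≥ N2 := le_trans (le_max_right _ _) hn
    have hd1 : ∀ j, N2 ≤ j →
        |(inner ℝ (u (k j)) (Ψ (k j) φ) : ℝ) - g (k j) p| < ε/4 := by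
      intro j hj
      have : (inner ℝ (u (k j)) (Ψ (k j) φ) : ℝ) - g (k j) p
          = - (inner ℝ (u (k j)) (Ψ (k j) (e p - φ)) : ℝ) := by
        rw [hgdef]
        dsimp only
        rw [map_sub, inner_sub_right]
        ring
      rw [this, abs_neg]
      exact lt_of_le_of_lt (habs _ _) (hN2 j hj)
    have hmid := hN1 m hm1 n hn1
    rw [Real.dist_eq] at hmid ⊢
    have t1 := hd1 m hm2
    have t2 := hd1 n hn2
    calc |(inner ℝ (u (k m)) (Ψ (k m) φ) : ℝ) - (inner ℝ (u (k n)) (Ψ (k n) φ) : ℝ)|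
        ≤ |(inner ℝ (u (k m)) (Ψ (k m) φ) : ℝ) - g (k m) p| + |g (k m) p - g (k n) p|
          + |g (k n) p - (inner ℝ (u (k n)) (Ψ (k n) φ) : ℝ)| := by
          have := abs_sub_le ((inner ℝ (u (k m)) (Ψ (k m) φ) : ℝ)) (g (k m) p)
            ((inner ℝ (u (k n)) (Ψ (k n) φ) : ℝ))
          have h2 := abs_sub_le (g (k m) p) (g (k n) p)
            ((inner ℝ (u (k n)) (Ψ (k n) φ) : ℝ))
          linarith
      _ < ε/4 + ε/4 + ε/4 := by
          rw [abs_sub_comm (g (k n) p)]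
          exact add_lt_add (add_lt_add t1 hmid) t2
      _ < ε := by linarith
  choose ℓ hℓ using hcauchy
  -- ℓ is linear and bounded
  have hadd : ∀ φ ψ : C, ℓ (φ + ψ) = ℓ φ + ℓ ψ := by
    intro φ ψ
    have h1 := (hℓ φ).add (hℓ ψ)
    have h2 : (fun j => (inner ℝ (u (k j)) (Ψ (k j) φ) : ℝ)
        + (inner ℝ (u (k j)) (Ψ (k j) ψ) : ℝ))
        = fun j => (inner ℝ (u (k j)) (Ψ (k j) (φ + ψ)) : ℝ) := by
      funext j
      rw [map_add, inner_add_right]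
    rw [h2] at h1
    exact tendsto_nhds_unique (hℓ (φ + ψ)) h1
  have hsmul : ∀ (c : ℝ) (φ : C), ℓ (c • φ) = c * ℓ φ := by
    intro c φ
    have h1 := (hℓ φ).const_mul c
    have h2 : (fun j => c * (inner ℝ (u (k j)) (Ψ (k j) φ) : ℝ))
        = fun j => (inner ℝ (u (k j)) (Ψ (k j) (c • φ)) : ℝ) := by
      funext j
      rw [map_smul, real_inner_smul_right]
    rw [h2] at h1
    exact tendsto_nhds_unique (hℓ (c • φ)) h1
  have hbound : ∀ φ : C, |ℓ φ| ≤ ‖(φ : Hoo)‖ := by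
    intro φ
    have h1 : Tendsto (fun j => |(inner ℝ (u (k j)) (Ψ (k j) φ) : ℝ)|) atTop (nhds |ℓ φ|) :=
      (hℓ φ).abs
    have h2 : Tendsto (fun j => ‖Ψ (k j) φ‖) atTop (nhds ‖(φ : Hoo)‖) :=
      (KSnorm C Ψ hΨ φ).comp hk.tendsto_atTop
    exact le_of_tendsto_of_tendsto' h1 h2 fun j => habs _ _
  -- build the continuous linear functional and its extension
  set Llin : C →ₗ[ℝ] ℝ :=
    { toFun := ℓ, map_add' := hadd, map_smul' := hsmul } with hLlin
  set Lcont : C →L[ℝ] ℝ := Llin.mkContinuous 1 (fun φ => by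
    rw [hLlin]
    simpa [Real.norm_eq_abs] using hbound φ) with hLcont
  have hsub_ui : IsUniformInducing (C.subtypeL : C →L[ℝ] Hoo) :=
    isUniformEmbedding_subtype_val.isUniformInducing
  have hsub_dense : DenseRange (C.subtypeL : C →L[ℝ] Hoo) := hC.denseRange_val
  set F : Hoo →L[ℝ] ℝ := Lcont.extend C.subtypeL with hF
  have hFeq : ∀ φ : C, F (φ : Hoo) = ℓ φ := by
    intro φ
    have := ContinuousLinearMap.extend_eq Lcont (e := C.subtypeL) hsub_dense hsub_ui φ
    exact this
  -- Riesz representation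
  set uoo : Hoo := (InnerProductSpace.toDual ℝ Hoo).symm F with huoo
  have hRiesz : ∀ x : Hoo, (inner ℝ uoo x : ℝ) = F x := fun x =>
    InnerProductSpace.toDual_symm_apply
  have hinner : ∀ φ : C, Tendsto (fun j => (inner ℝ (u (k j)) (Ψ (k j) φ) : ℝ)) atTop
      (nhds (inner ℝ uoo (φ : Hoo) : ℝ)) := by
    intro φ
    rw [hRiesz, hFeq]
    exact hℓ φ
  refine ⟨uoo, k, hk, ?_⟩
  intro v voo hv
  apply tendsto_of_eventually_abs_le (show (0:ℝ) < 2 + ‖uoo‖ by positivity)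
  intro ε hε
  obtain ⟨p, hp⟩ := hdense voo ε hε
  -- eventually ‖v n - Ψ n (e p)‖ < ε
  have hsq : Tendsto (fun n => ‖v n - Ψ n (e p)‖^2) atTop (nhds (‖voo - (e p : Hoo)‖^2)) := by
    have h1 : ∀ n, ‖v n - Ψ n (e p)‖^2
        = ‖v n‖^2 - 2*(inner ℝ (v n) (Ψ n (e p)) : ℝ) + ‖Ψ n (e p)‖^2 := fun n =>
      norm_sub_sq_real _ _
    have h2 : ‖voo - (e p : Hoo)‖^2
        = ‖voo‖^2 - 2*(inner ℝ voo ((e p : Hoo)) : ℝ) + ‖(e p : Hoo)‖^2 :=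
      norm_sub_sq_real _ _
    simp only [h1, h2]
    exact ((hv.2.pow 2).sub ((hv.1 (e p)).const_mul 2)).add ((KSnorm C Ψ hΨ (e p)).pow 2)
  have hvev : ∀ᶠ n in atTop, ‖v n - Ψ n (e p)‖ < ε := by
    have hlt : ‖voo - (e p : Hoo)‖^2 < ε^2 := by
      apply pow_lt_pow_left₀ _ (norm_nonneg _) (by norm_num)
      rwa [norm_sub_rev] at hp
    filter_upwards [hsq.eventually_lt_const hlt] with n hn
    exact lt_of_pow_lt_pow_left₀ 2 hε.le hn
  have hvevk : ∀ᶠ j in atTop, ‖v (k j) - Ψ (k j) (e p)‖ < ε :=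
    hk.tendsto_atTop.eventually hvev
  have hmidev : ∀ᶠ j in atTop,
      |(inner ℝ (u (k j)) (Ψ (k j) (e p)) : ℝ) - (inner ℝ uoo ((e p : Hoo)) : ℝ)| < ε := by
    have := (hinner (e p)).eventually (Metric.ball_mem_nhds _ hε)
    filter_upwards [this] with j hj
    rwa [Real.dist_eq] at hj
  filter_upwards [hvevk, hmidev] with j h1 h2
  have hdecomp : (inner ℝ (u (k j)) (v (k j)) : ℝ) - (inner ℝ uoo voo : ℝ)
      = (inner ℝ (u (k j)) (v (k j) - Ψ (k j) (e p)) : ℝ)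
        + ((inner ℝ (u (k j)) (Ψ (k j) (e p)) : ℝ) - (inner ℝ uoo ((e p : Hoo)) : ℝ))
        + (inner ℝ uoo ((e p : Hoo) - voo) : ℝ) := by
    rw [inner_sub_right, inner_sub_right]
    ring
  have hb1 : |(inner ℝ (u (k j)) (v (k j) - Ψ (k j) (e p)) : ℝ)| ≤ ε := by
    calc |(inner ℝ (u (k j)) (v (k j) - Ψ (k j) (e p)) : ℝ)|
        ≤ ‖u (k j)‖ * ‖v (k j) - Ψ (k j) (e p)‖ := abs_real_inner_le_norm _ _
      _ ≤ 1 * ε := mul_le_mul (hu _) h1.le (norm_nonneg _) one_pos.le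
      _ = ε := one_mul _
  have hb3 : |(inner ℝ uoo ((e p : Hoo) - voo) : ℝ)| ≤ ‖uoo‖ * ε := by
    calc |(inner ℝ uoo ((e p : Hoo) - voo) : ℝ)|
        ≤ ‖uoo‖ * ‖(e p : Hoo) - voo‖ := abs_real_inner_le_norm _ _
      _ ≤ ‖uoo‖ * ε := mul_le_mul_of_nonneg_left hp.le (norm_nonneg _)
  rw [hdecomp]
  calc |(inner ℝ (u (k j)) (v (k j) - Ψ (k j) (e p)) : ℝ)
        + ((inner ℝ (u (k j)) (Ψ (k j) (e p)) : ℝ) - (inner ℝ uoo ((e p : Hoo)) : ℝ))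
        + (inner ℝ uoo ((e p : Hoo) - voo) : ℝ)|
      ≤ |(inner ℝ (u (k j)) (v (k j) - Ψ (k j) (e p)) : ℝ)|
        + |(inner ℝ (u (k j)) (Ψ (k j) (e p)) : ℝ) - (inner ℝ uoo ((e p : Hoo)) : ℝ)|
        + |(inner ℝ uoo ((e p : Hoo) - voo) : ℝ)| := abs_add_three _ _ _
    _ ≤ ε + ε + ‖uoo‖ * ε := add_le_add (add_le_add hb1 h2.le) hb3
    _ = (2 + ‖uoo‖) * ε := by ring


/-- Kuwae–Shioya: in a sequence of converging Hilbert spaces, (i) every `u ∈ H_∞` is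
the asymptotic element of a strongly convergent section; (iii) the norm is weakly
lower semi-continuous with finite `liminf`; (iv) every norm-bounded section has a
weakly convergent subsection. -/
theorem stmt15 [∀ n, CompleteSpace (H n)] [CompleteSpace Hoo]
    [∀ n, TopologicalSpace.SeparableSpace (H n)]
    [TopologicalSpace.SeparableSpace Hoo]
    (C : Submodule ℝ Hoo) (hC : Dense (C : Set Hoo))
    (Ψ : ∀ n, C →ₗ[ℝ] H n)
    (hΨ : ∀ φ : C, Tendsto (fun n => (inner ℝ (Ψ n φ) (Ψ n φ) : ℝ)) atTop
      (nhds (inner ℝ (φ : Hoo) (φ : Hoo) : ℝ))) :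
    (∀ uoo : Hoo, ∃ u : ∀ n, H n, StrongConv C Ψ u uoo) ∧
    (∀ (u : ∀ n, H n) (uoo : Hoo), WeakConv C Ψ u uoo →
      (‖uoo‖₊ : ENNReal) ≤ Filter.liminf (fun n => (‖u n‖₊ : ENNReal)) atTop ∧
      Filter.liminf (fun n => (‖u n‖₊ : ENNReal)) atTop ≠ ⊤) ∧
    (∀ u : ∀ n, H n, (∀ n, ‖u n‖ ≤ 1) →
      ∃ (uoo : Hoo) (k : ℕ → ℕ), StrictMono k ∧
        ∀ (v : ∀ n, H n) (voo : Hoo), StrongConv C Ψ v voo →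
          Tendsto (fun j => (inner ℝ (u (k j)) (v (k j)) : ℝ)) atTop
            (nhds (inner ℝ uoo voo : ℝ))) := by
  refine ⟨fun uoo => KSexists C hC Ψ hΨ uoo,
    fun u uoo hu => ⟨KSliminf_le C hC Ψ hΨ u uoo hu, KSliminf_ne_top C Ψ hΨ u uoo hu⟩,
    fun u hu => KSweakcompact C hC Ψ hΨ u hu⟩
end

section
/- A section (u_N) in a sequence of converging Hilbert spaces is strongly convergent if and only if lim_N ⟨u_N, v_N⟩_N = ⟨u_∞, v_∞⟩_∞ for every weakly convergent section (v_N). -/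
open Filter

variable {H : ℕ → Type*} [∀ n, NormedAddCommGroup (H n)]
  [∀ n, InnerProductSpace ℝ (H n)]
  {Hoo : Type*} [NormedAddCommGroup Hoo] [InnerProductSpace ℝ Hoo]

lemma norm_sub_eq_sqrt {E : Type*} [NormedAddCommGroup E] [InnerProductSpace ℝ E]
    (a b : E) : ‖a - b‖
      = Real.sqrt ((inner ℝ a a : ℝ) - 2 * (inner ℝ a b : ℝ) + (inner ℝ b b : ℝ)) := by
  have h : ‖a - b‖ ^ 2 = (inner ℝ a a : ℝ) - 2 * (inner ℝ a b : ℝ) + (inner ℝ b b : ℝ) := by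
    rw [@norm_sub_sq_real]
    simp [real_inner_self_eq_norm_sq]
  rw [← h, Real.sqrt_sq (norm_nonneg _)]

/-- Strong convergence implies weak convergence. -/
lemma strongConv_weakConv (C : Submodule ℝ Hoo) (hC : Dense (C : Set Hoo))
    (Ψ : ∀ n, C →ₗ[ℝ] H n)
    (hΨ : ∀ φ : C, Tendsto (fun n => (inner ℝ (Ψ n φ) (Ψ n φ) : ℝ)) atTop
      (nhds (inner ℝ (φ : Hoo) (φ : Hoo) : ℝ)))
    (v : ∀ n, H n) (voo : Hoo) (hv : StrongConv C Ψ v voo) :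
    WeakConv C Ψ v voo := by
  intro w woo hw
  rw [Metric.tendsto_atTop]
  intro ε hε
  set M : ℝ := ‖woo‖ + 1 with hMdef
  have hM : 0 < M := by positivity
  set δ : ℝ := ε / (8 * M) with hδdef
  have hδ : 0 < δ := by positivity
  obtain ⟨y, hyC, hy⟩ := Metric.mem_closure_iff.mp (hC voo) δ hδ
  set φ : C := ⟨y, hyC⟩ with hφdef
  have hdist : ‖voo - (φ : Hoo)‖ < δ := by
    simpa [dist_eq_norm] using hy
  -- norm of `v n - Ψ n φ` tends to `‖voo - φ‖`
  have hvv : Tendsto (fun n => (inner ℝ (v n) (v n) : ℝ)) atTop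
      (nhds (inner ℝ voo voo : ℝ)) := by
    have := hv.2.mul hv.2
    simpa [real_inner_self_eq_norm_mul_norm, pow_two] using this
  have hexpr : Tendsto
      (fun n => (inner ℝ (v n) (v n) : ℝ) - 2 * (inner ℝ (v n) (Ψ n φ) : ℝ)
        + (inner ℝ (Ψ n φ) (Ψ n φ) : ℝ)) atTop
      (nhds ((inner ℝ voo voo : ℝ) - 2 * (inner ℝ voo (φ : Hoo) : ℝ)
        + (inner ℝ (φ : Hoo) (φ : Hoo) : ℝ))) :=
    (hvv.sub ((hv.1 φ).const_mul 2)).add (hΨ φ)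
  have hn : Tendsto (fun n => ‖v n - Ψ n φ‖) atTop (nhds ‖voo - (φ : Hoo)‖) := by
    convert (Real.continuous_sqrt.tendsto _).comp hexpr using 1
    · funext n; exact norm_sub_eq_sqrt (v n) (Ψ n φ)
    · rw [norm_sub_eq_sqrt voo (φ : Hoo)]
  -- eventual bounds
  have E1 : ∀ᶠ n in atTop, ‖v n - Ψ n φ‖ < 2 * δ :=
    hn.eventually_lt_const (by linarith)
  have E2 : ∀ᶠ n in atTop, ‖w n‖ < M :=
    hw.2.eventually_lt_const (by simp [hMdef])
  have E3 : ∀ᶠ n in atTop, |(inner ℝ (Ψ n φ) (w n) : ℝ) - (inner ℝ (φ : Hoo) woo : ℝ)| < ε / 4 := by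
    have h := Metric.tendsto_atTop.mp (hw.1 φ) (ε / 4) (by positivity)
    obtain ⟨N, hN⟩ := h
    refine eventually_atTop.mpr ⟨N, fun n hn => ?_⟩
    have := hN n hn
    rw [Real.dist_eq] at this
    simpa [real_inner_comm] using this
  obtain ⟨N, hN⟩ := eventually_atTop.mp ((E1.and E2).and E3)
  refine ⟨N, fun n hn => ?_⟩
  obtain ⟨⟨h1, h2⟩, h3⟩ := hN n hn
  rw [Real.dist_eq]
  have key : (inner ℝ (v n) (w n) : ℝ) - (inner ℝ voo woo : ℝ)
      = (inner ℝ (v n - Ψ n φ) (w n) : ℝ)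
        + ((inner ℝ (Ψ n φ) (w n) : ℝ) - (inner ℝ (φ : Hoo) woo : ℝ))
        + (inner ℝ ((φ : Hoo) - voo) woo : ℝ) := by
    rw [inner_sub_left, inner_sub_left]; ring
  rw [key]
  have b1 : |(inner ℝ (v n - Ψ n φ) (w n) : ℝ)| ≤ 2 * δ * M := by
    calc |(inner ℝ (v n - Ψ n φ) (w n) : ℝ)| ≤ ‖v n - Ψ n φ‖ * ‖w n‖ := abs_real_inner_le_norm _ _
      _ ≤ 2 * δ * M := by
          apply mul_le_mul h1.le h2.le (norm_nonneg _) (by positivity)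
  have b3 : |(inner ℝ ((φ : Hoo) - voo) woo : ℝ)| ≤ δ * M := by
    calc |(inner ℝ ((φ : Hoo) - voo) woo : ℝ)| ≤ ‖(φ : Hoo) - voo‖ * ‖woo‖ :=
          abs_real_inner_le_norm _ _
      _ ≤ δ * M := by
          have : ‖(φ : Hoo) - voo‖ < δ := by rwa [norm_sub_rev]
          have h4 : ‖woo‖ ≤ M := by simp [hMdef]
          exact mul_le_mul this.le h4 (norm_nonneg _) hδ.le
  have hδM : δ * M = ε / 8 := by
    field_simp [hδdef]
    rw [hδdef]; field_simp [hM.ne']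
  calc |(inner ℝ (v n - Ψ n φ) (w n) : ℝ)
        + ((inner ℝ (Ψ n φ) (w n) : ℝ) - (inner ℝ (φ : Hoo) woo : ℝ))
        + (inner ℝ ((φ : Hoo) - voo) woo : ℝ)|
      ≤ |(inner ℝ (v n - Ψ n φ) (w n) : ℝ)|
        + |(inner ℝ (Ψ n φ) (w n) : ℝ) - (inner ℝ (φ : Hoo) woo : ℝ)|
        + |(inner ℝ ((φ : Hoo) - voo) woo : ℝ)| := by
          exact (abs_add_le _ _).trans (by gcongr; exact abs_add_le _ _)
    _ < ε := by
        have := h3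
        nlinarith [b1, b3, hδM]

/-- Kuwae–Shioya duality: a section `(u_N)` is strongly convergent if and only if
`⟨u_N, v_N⟩_N → ⟨u_∞, v_∞⟩_∞` for every weakly convergent section `(v_N)`. -/
theorem stmt16 [∀ n, CompleteSpace (H n)] [CompleteSpace Hoo]
    [∀ n, TopologicalSpace.SeparableSpace (H n)]
    [TopologicalSpace.SeparableSpace Hoo]
    (C : Submodule ℝ Hoo) (hC : Dense (C : Set Hoo))
    (Ψ : ∀ n, C →ₗ[ℝ] H n)
    (hΨ : ∀ φ : C, Tendsto (fun n => (inner ℝ (Ψ n φ) (Ψ n φ) : ℝ)) atTop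
      (nhds (inner ℝ (φ : Hoo) (φ : Hoo) : ℝ)))
    (u : ∀ n, H n) (uoo : Hoo) :
    StrongConv C Ψ u uoo ↔
      ∀ (v : ∀ n, H n) (voo : Hoo), WeakConv C Ψ v voo →
        Tendsto (fun n => (inner ℝ (u n) (v n) : ℝ)) atTop
          (nhds (inner ℝ uoo voo : ℝ)) := by
  constructor
  · intro hu v voo hv
    have := hv u uoo hu
    simpa [real_inner_comm] using this
  · intro h
    have hfirst : ∀ φ : C, Tendsto (fun n => (inner ℝ (u n) (Ψ n φ) : ℝ)) atTop
        (nhds (inner ℝ uoo (φ : Hoo) : ℝ)) := by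
      intro φ
      apply h (fun n => Ψ n φ) (φ : Hoo)
      intro w woo hw
      simpa [real_inner_comm] using hw.1 φ
    have huweak : WeakConv C Ψ u uoo := by
      intro w woo hw
      exact h w woo (strongConv_weakConv C hC Ψ hΨ w woo hw)
    have hnorm2 := h u uoo huweak
    have hnorm : Tendsto (fun n => ‖u n‖) atTop (nhds ‖uoo‖) := by
      convert (Real.continuous_sqrt.tendsto _).comp hnorm2 using 1
      · funext n
        show ‖u n‖ = Real.sqrt (inner ℝ (u n) (u n) : ℝ)
        rw [real_inner_self_eq_norm_mul_norm, Real.sqrt_mul_self (norm_nonneg _)]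
      · rw [show (inner ℝ uoo uoo : ℝ) = ‖uoo‖ * ‖uoo‖ from real_inner_self_eq_norm_mul_norm _,
          Real.sqrt_mul_self (norm_nonneg _)]
    exact ⟨hfirst, hnorm⟩
end

section
/- Sandwich lemma for strong L² convergence with varying measures: Let μ_N be probability measures on a Polish space E converging weakly to μ_∞ with supp(μ_N) ⊂ supp(μ_∞), and let g_N, f_N^m, F_N^m be bounded measurable functions with 0 ≤ f_N^m ≤ g_N ≤ F_N^m pointwise for all N, m. If f_∞^m → g_∞ and F_∞^m → g_∞ strongly in L²(E, μ_∞) as m → ∞, and for each fixed m the sections (f_N^m)_N and (F_N^m)_N converge strongly (w.r.t. the converging Hilbert spaces L²(E, μ_N)), then (g_N)_N converges strongly to g_∞. -/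
open MeasureTheory Filter

/-- The topological support of a measure: points all of whose open neighbourhoods
have positive measure. -/
def measSupport {E : Type*} [TopologicalSpace E] [MeasurableSpace E]
    (μ : Measure E) : Set E :=
  {x | ∀ U : Set E, IsOpen U → x ∈ U → μ U ≠ 0}

/-- Strong convergence of a section `(h_N)` with `h_N ∈ L²(E, μ_N)` towards
`h_∞ ∈ L²(E, μ_∞)` in the Kuwae–Shioya sense for the converging Hilbert spaces
`L²(E, μ_N)`: `∫ h_N φ dμ_N → ∫ h_∞ φ dμ_∞` for every bounded continuous `φ`, and
`∫ h_N² dμ_N → ∫ h_∞² dμ_∞`. -/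
def StrongL2 {E : Type*} [TopologicalSpace E] [MeasurableSpace E]
    (μ : ℕ → Measure E) (μoo : Measure E)
    (h : ℕ → E → ℝ) (hoo : E → ℝ) : Prop :=
  (∀ φ : BoundedContinuousFunction E ℝ,
    Tendsto (fun n => ∫ x, h n x * φ x ∂μ n) atTop
      (nhds (∫ x, hoo x * φ x ∂μoo))) ∧
  Tendsto (fun n => ∫ x, (h n x) ^ 2 ∂μ n) atTop
    (nhds (∫ x, (hoo x) ^ 2 ∂μoo))

section Aux

variable {α : Type*} [MeasurableSpace α] {μ : Measure α}

lemma aux_memL2 [IsFiniteMeasure μ] {h : α → ℝ} (hm : Measurable h) {C : ℝ}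
    (hb : ∀ x, |h x| ≤ C) : MemLp h 2 μ :=
  MemLp.of_bound hm.aestronglyMeasurable C
    (Filter.Eventually.of_forall (by simpa [Real.norm_eq_abs] using hb))

lemma aux_int_mul {h k : α → ℝ} (hh : MemLp h 2 μ) (hk : MemLp k 2 μ) :
    Integrable (fun x => h x * k x) μ := by
  have hint := MeasureTheory.L2.integrable_inner (𝕜 := ℝ) (hh.toLp h) (hk.toLp k)
  refine hint.congr ?_
  filter_upwards [hh.coeFn_toLp, hk.coeFn_toLp] with x hx hy
  simp [hx, hy, RCLike.inner_apply, mul_comm]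

lemma aux_sqrt_eq {p : α → ℝ} (hp : MemLp p 2 μ) :
    Real.sqrt (∫ x, p x ^ 2 ∂μ) = ‖hp.toLp p‖ := by
  have h1 : (inner ℝ (hp.toLp p) (hp.toLp p) : ℝ) = ‖hp.toLp p‖ ^ 2 :=
    real_inner_self_eq_norm_sq _
  have h2 : ∫ x, p x ^ 2 ∂μ = ‖hp.toLp p‖ ^ 2 := by
    rw [← h1, MeasureTheory.L2.inner_def]
    refine integral_congr_ae ?_
    filter_upwards [hp.coeFn_toLp] with x hx
    simp [hx, RCLike.inner_apply, pow_two]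
  rw [h2, Real.sqrt_sq (norm_nonneg _)]

/-- Cauchy–Schwarz for integrals of real functions in `L²`. -/
lemma aux_cs {h k : α → ℝ} (hh : MemLp h 2 μ) (hk : MemLp k 2 μ) :
    |∫ x, h x * k x ∂μ| ≤
      Real.sqrt (∫ x, h x ^ 2 ∂μ) * Real.sqrt (∫ x, k x ^ 2 ∂μ) := by
  have hHK : ∫ x, h x * k x ∂μ = (inner ℝ (hh.toLp h) (hk.toLp k) : ℝ) := by
    rw [MeasureTheory.L2.inner_def]
    refine integral_congr_ae ?_
    filter_upwards [hh.coeFn_toLp, hk.coeFn_toLp] with x hx hy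
    simp [hx, hy, RCLike.inner_apply, mul_comm]
  rw [hHK, aux_sqrt_eq hh, aux_sqrt_eq hk]
  exact abs_real_inner_le_norm _ _

/-- If `∫ (pₘ - q)² → 0` then `∫ pₘ ψ → ∫ q ψ` for every `ψ ∈ L²`. -/
lemma aux_key {p : ℕ → α → ℝ} {q ψ : α → ℝ}
    (hp : ∀ m, MemLp (p m) 2 μ) (hq : MemLp q 2 μ) (hψ : MemLp ψ 2 μ)
    (h0 : Tendsto (fun m => ∫ x, (p m x - q x) ^ 2 ∂μ) atTop (nhds 0)) :
    Tendsto (fun m => ∫ x, p m x * ψ x ∂μ) atTop (nhds (∫ x, q x * ψ x ∂μ)) := by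
  have key : ∀ m, |∫ x, p m x * ψ x ∂μ - ∫ x, q x * ψ x ∂μ| ≤
      Real.sqrt (∫ x, (p m x - q x) ^ 2 ∂μ) * Real.sqrt (∫ x, ψ x ^ 2 ∂μ) := by
    intro m
    have h1 : ∫ x, p m x * ψ x ∂μ - ∫ x, q x * ψ x ∂μ
        = ∫ x, (p m x - q x) * ψ x ∂μ := by
      rw [← integral_sub (aux_int_mul (hp m) hψ) (aux_int_mul hq hψ)]
      simp [sub_mul]
    rw [h1]
    exact aux_cs ((hp m).sub hq) hψ
  have hs : Tendsto (fun m => Real.sqrt (∫ x, (p m x - q x) ^ 2 ∂μ) *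
      Real.sqrt (∫ x, ψ x ^ 2 ∂μ)) atTop (nhds 0) := by
    have hsq : Tendsto (fun m => Real.sqrt (∫ x, (p m x - q x) ^ 2 ∂μ)) atTop
        (nhds 0) := by
      have := (Real.continuous_sqrt.tendsto 0).comp h0
      simpa [Function.comp_def] using this
    simpa using hsq.mul_const (Real.sqrt (∫ x, ψ x ^ 2 ∂μ))
  have hz : Tendsto (fun m => ∫ x, p m x * ψ x ∂μ - ∫ x, q x * ψ x ∂μ) atTop
      (nhds 0) :=
    squeeze_zero_norm (fun m => by simpa [Real.norm_eq_abs] using key m) hs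
  have := hz.add_const (∫ x, q x * ψ x ∂μ)
  simpa using this

/-- A squeeze lemma for iterated limits. -/
lemma aux_squeeze {u : ℕ → ℝ} {a b : ℕ → ℕ → ℝ} {A B : ℕ → ℝ} {L : ℝ}
    (hab : ∀ m n, a m n ≤ u n ∧ u n ≤ b m n)
    (ha : ∀ m, Tendsto (a m) atTop (nhds (A m)))
    (hb : ∀ m, Tendsto (b m) atTop (nhds (B m)))
    (hA : Tendsto A atTop (nhds L)) (hB : Tendsto B atTop (nhds L)) :
    Tendsto u atTop (nhds L) := by
  rw [Metric.tendsto_atTop]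
  intro ε hε
  have hε3 : 0 < ε / 3 := by linarith
  obtain ⟨M1, hM1⟩ := Metric.tendsto_atTop.mp hA (ε / 3) hε3
  obtain ⟨M2, hM2⟩ := Metric.tendsto_atTop.mp hB (ε / 3) hε3
  set m := max M1 M2
  have hAm := hM1 m (le_max_left _ _)
  have hBm := hM2 m (le_max_right _ _)
  obtain ⟨N1, hN1⟩ := Metric.tendsto_atTop.mp (ha m) (ε / 3) hε3
  obtain ⟨N2, hN2⟩ := Metric.tendsto_atTop.mp (hb m) (ε / 3) hε3
  refine ⟨max N1 N2, fun n hn => ?_⟩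
  have h1 := hN1 n (le_trans (le_max_left _ _) hn)
  have h2 := hN2 n (le_trans (le_max_right _ _) hn)
  rw [Real.dist_eq, abs_sub_lt_iff] at h1 h2 hAm hBm ⊢
  have h3 := (hab m n).1
  have h4 := (hab m n).2
  constructor <;> linarith

end Aux

/-- Sandwich lemma for strong `L²` convergence with varying measures. -/
theorem stmt17 {E : Type*} [TopologicalSpace E] [PolishSpace E]
    [MeasurableSpace E] [BorelSpace E]
    (μ : ℕ → Measure E) (μoo : Measure E)
    [∀ n, IsProbabilityMeasure (μ n)] [IsProbabilityMeasure μoo]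
    (hweak : ∀ φ : BoundedContinuousFunction E ℝ,
      Tendsto (fun n => ∫ x, φ x ∂μ n) atTop (nhds (∫ x, φ x ∂μoo)))
    (hsupp : ∀ n, measSupport (μ n) ⊆ measSupport μoo)
    (g : ℕ → E → ℝ) (goo : E → ℝ)
    (f F : ℕ → ℕ → E → ℝ) (foo Foo : ℕ → E → ℝ)
    (hmeas : (∀ n, Measurable (g n)) ∧ Measurable goo ∧
      (∀ n m, Measurable (f n m) ∧ Measurable (F n m)) ∧
      (∀ m, Measurable (foo m) ∧ Measurable (Foo m)))
    (hbdd : (∀ n, ∃ C, ∀ x, |g n x| ≤ C) ∧ (∃ C, ∀ x, |goo x| ≤ C) ∧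
      (∀ n m, ∃ C, ∀ x, |f n m x| ≤ C ∧ |F n m x| ≤ C) ∧
      (∀ m, ∃ C, ∀ x, |foo m x| ≤ C ∧ |Foo m x| ≤ C))
    (horder : ∀ n m x, 0 ≤ f n m x ∧ f n m x ≤ g n x ∧ g n x ≤ F n m x)
    (horderoo : ∀ m x, 0 ≤ foo m x ∧ foo m x ≤ goo x ∧ goo x ≤ Foo m x)
    (hfoo : Tendsto (fun m => ∫ x, (foo m x - goo x) ^ 2 ∂μoo) atTop (nhds 0))
    (hFoo : Tendsto (fun m => ∫ x, (Foo m x - goo x) ^ 2 ∂μoo) atTop (nhds 0))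
    (hfstrong : ∀ m, StrongL2 μ μoo (fun n => f n m) (foo m))
    (hFstrong : ∀ m, StrongL2 μ μoo (fun n => F n m) (Foo m)) :
    StrongL2 μ μoo g goo := by
  -- Memℒp facts
  have Mg : ∀ n, MemLp (g n) 2 (μ n) := fun n => by
    obtain ⟨C, hC⟩ := hbdd.1 n; exact aux_memL2 (hmeas.1 n) hC
  have Mgoo : MemLp goo 2 μoo := by
    obtain ⟨C, hC⟩ := hbdd.2.1; exact aux_memL2 hmeas.2.1 hC
  have Mf : ∀ n m, MemLp (f n m) 2 (μ n) := fun n m => by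
    obtain ⟨C, hC⟩ := hbdd.2.2.1 n m
    exact aux_memL2 (hmeas.2.2.1 n m).1 (fun x => (hC x).1)
  have MF : ∀ n m, MemLp (F n m) 2 (μ n) := fun n m => by
    obtain ⟨C, hC⟩ := hbdd.2.2.1 n m
    exact aux_memL2 (hmeas.2.2.1 n m).2 (fun x => (hC x).2)
  have Mfoo : ∀ m, MemLp (foo m) 2 μoo := fun m => by
    obtain ⟨C, hC⟩ := hbdd.2.2.2 m
    exact aux_memL2 (hmeas.2.2.2 m).1 (fun x => (hC x).1)
  have MFoo : ∀ m, MemLp (Foo m) 2 μoo := fun m => by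
    obtain ⟨C, hC⟩ := hbdd.2.2.2 m
    exact aux_memL2 (hmeas.2.2.2 m).2 (fun x => (hC x).2)
  have Mone : MemLp (fun _ : E => (1 : ℝ)) 2 μoo :=
    aux_memL2 measurable_const (C := 1) (fun _ => by norm_num)
  -- integrals of f, F against 1 converge along n
  have hfone : ∀ m, Tendsto (fun n => ∫ x, f n m x ∂μ n) atTop
      (nhds (∫ x, foo m x ∂μoo)) := fun m => by
    have := (hfstrong m).1 (1 : BoundedContinuousFunction E ℝ)
    simpa using this
  have hFone : ∀ m, Tendsto (fun n => ∫ x, F n m x ∂μ n) atTop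
      (nhds (∫ x, Foo m x ∂μoo)) := fun m => by
    have := (hFstrong m).1 (1 : BoundedContinuousFunction E ℝ)
    simpa using this
  -- limits along m, on μoo
  have hfint : Tendsto (fun m => ∫ x, foo m x ∂μoo) atTop
      (nhds (∫ x, goo x ∂μoo)) := by
    have := aux_key (ψ := fun _ : E => (1 : ℝ)) Mfoo Mgoo Mone hfoo
    simpa using this
  have hFint : Tendsto (fun m => ∫ x, Foo m x ∂μoo) atTop
      (nhds (∫ x, goo x ∂μoo)) := by
    have := aux_key (ψ := fun _ : E => (1 : ℝ)) MFoo Mgoo Mone hFoo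
    simpa using this
  have hDzero : Tendsto (fun m => ∫ x, Foo m x ∂μoo - ∫ x, foo m x ∂μoo) atTop
      (nhds 0) := by
    have := hFint.sub hfint
    simpa using this
  constructor
  · -- first component: test against bounded continuous φ
    intro φ
    have Mφ : ∀ ν : Measure E, IsProbabilityMeasure ν →
        MemLp (fun x => φ x) 2 ν := fun ν _ =>
      aux_memL2 φ.continuous.measurable (C := ‖φ‖)
        (fun x => by simpa [Real.norm_eq_abs] using φ.norm_coe_le_norm x)
    have Mφn : ∀ n, MemLp (fun x => φ x) 2 (μ n) := fun n => Mφ _ inferInstance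
    have Mφoo : MemLp (fun x => φ x) 2 μoo := Mφ _ inferInstance
    -- sandwich bounds
    have hab : ∀ m n,
        (∫ x, f n m x * φ x ∂μ n) -
          ‖φ‖ * (∫ x, F n m x ∂μ n - ∫ x, f n m x ∂μ n) ≤ ∫ x, g n x * φ x ∂μ n ∧
        ∫ x, g n x * φ x ∂μ n ≤ (∫ x, f n m x * φ x ∂μ n) +
          ‖φ‖ * (∫ x, F n m x ∂μ n - ∫ x, f n m x ∂μ n) := by
      intro m n
      have hintF : Integrable (F n m) (μ n) := (MF n m).integrable one_le_two
      have hintf : Integrable (f n m) (μ n) := (Mf n m).integrable one_le_two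
      have hsub : ∫ x, F n m x ∂μ n - ∫ x, f n m x ∂μ n
          = ∫ x, (F n m x - f n m x) ∂μ n := (integral_sub hintF hintf).symm
      have hkey : |∫ x, g n x * φ x ∂μ n - ∫ x, f n m x * φ x ∂μ n| ≤
          ‖φ‖ * (∫ x, F n m x ∂μ n - ∫ x, f n m x ∂μ n) := by
        have h1 : ∫ x, g n x * φ x ∂μ n - ∫ x, f n m x * φ x ∂μ n
            = ∫ x, (g n x - f n m x) * φ x ∂μ n := by
          rw [← integral_sub (aux_int_mul (Mg n) (Mφn n)) (aux_int_mul (Mf n m) (Mφn n))]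
          simp [sub_mul]
        rw [h1, hsub]
        calc |∫ x, (g n x - f n m x) * φ x ∂μ n|
            ≤ ∫ x, |(g n x - f n m x) * φ x| ∂μ n := by
              have := norm_integral_le_integral_norm (μ := μ n)
                (fun x => (g n x - f n m x) * φ x)
              simpa only [Real.norm_eq_abs] using this
          _ ≤ ∫ x, (F n m x - f n m x) * ‖φ‖ ∂μ n := by
              refine integral_mono
                (aux_int_mul ((Mg n).sub (Mf n m)) (Mφn n)).abs
                ((hintF.sub hintf).mul_const ‖φ‖) ?_
              intro x
              show |(g n x - f n m x) * φ x| ≤ (F n m x - f n m x) * ‖φ‖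
              rw [abs_mul]
              refine mul_le_mul ?_ ?_ (abs_nonneg _) ?_
              · rw [abs_of_nonneg (by linarith [(horder n m x).2.1])]
                linarith [(horder n m x).2.2]
              · simpa [Real.norm_eq_abs] using φ.norm_coe_le_norm x
              · linarith [(horder n m x).2.1, (horder n m x).2.2]
          _ = ‖φ‖ * ∫ x, (F n m x - f n m x) ∂μ n := by
              rw [integral_mul_const, mul_comm]
      rw [abs_le] at hkey
      constructor <;> [linarith [hkey.1]; linarith [hkey.2]]
    -- apply the squeeze lemma
    refine aux_squeeze (A := fun m => (∫ x, foo m x * φ x ∂μoo) -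
        ‖φ‖ * (∫ x, Foo m x ∂μoo - ∫ x, foo m x ∂μoo))
      (B := fun m => (∫ x, foo m x * φ x ∂μoo) +
        ‖φ‖ * (∫ x, Foo m x ∂μoo - ∫ x, foo m x ∂μoo))
      hab (fun m => ?_) (fun m => ?_) ?_ ?_
    · exact ((hfstrong m).1 φ).sub (((hFone m).sub (hfone m)).const_mul ‖φ‖)
    · exact ((hfstrong m).1 φ).add (((hFone m).sub (hfone m)).const_mul ‖φ‖)
    · have h1 : Tendsto (fun m => ∫ x, foo m x * φ x ∂μoo) atTop
          (nhds (∫ x, goo x * φ x ∂μoo)) := aux_key Mfoo Mgoo Mφoo hfoo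
      have := h1.sub (hDzero.const_mul ‖φ‖)
      simpa using this
    · have h1 : Tendsto (fun m => ∫ x, foo m x * φ x ∂μoo) atTop
          (nhds (∫ x, goo x * φ x ∂μoo)) := aux_key Mfoo Mgoo Mφoo hfoo
      have := h1.add (hDzero.const_mul ‖φ‖)
      simpa using this
  · -- second component: squares
    have hab : ∀ m n, (∫ x, f n m x ^ 2 ∂μ n) ≤ ∫ x, g n x ^ 2 ∂μ n ∧
        (∫ x, g n x ^ 2 ∂μ n) ≤ ∫ x, F n m x ^ 2 ∂μ n := by
      intro m n
      constructor
      · refine integral_mono (Mf n m).integrable_sq (Mg n).integrable_sq ?_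
        intro x
        exact pow_le_pow_left₀ (horder n m x).1 (horder n m x).2.1 2
      · refine integral_mono (Mg n).integrable_sq (MF n m).integrable_sq ?_
        intro x
        exact pow_le_pow_left₀ (by linarith [(horder n m x).1, (horder n m x).2.1])
          (horder n m x).2.2 2
    -- limits of ∫ (foo m)² and ∫ (Foo m)² as m → ∞
    have hgg : ∫ x, goo x * goo x ∂μoo = ∫ x, goo x ^ 2 ∂μoo := by
      simp_rw [pow_two]
    have hsqlim : ∀ (p : ℕ → E → ℝ), (∀ m, MemLp (p m) 2 μoo) →
        Tendsto (fun m => ∫ x, (p m x - goo x) ^ 2 ∂μoo) atTop (nhds 0) →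
        Tendsto (fun m => ∫ x, p m x ^ 2 ∂μoo) atTop (nhds (∫ x, goo x ^ 2 ∂μoo)) := by
      intro p Mp h0
      have hid : ∀ m, ∫ x, p m x ^ 2 ∂μoo = (∫ x, (p m x - goo x) ^ 2 ∂μoo) +
          (2 * (∫ x, p m x * goo x ∂μoo) - ∫ x, goo x ^ 2 ∂μoo) := by
        intro m
        have e1 : Integrable (fun x => (p m x - goo x) ^ 2) μoo :=
          ((Mp m).sub Mgoo).integrable_sq
        have e2 : Integrable (fun x => p m x * goo x) μoo := aux_int_mul (Mp m) Mgoo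
        have e3 : Integrable (fun x => goo x ^ 2) μoo := Mgoo.integrable_sq
        have hpt : (fun x => p m x ^ 2) =
            fun x => (p m x - goo x) ^ 2 + (2 * (p m x * goo x) - goo x ^ 2) := by
          funext x; ring
        have e4 : Integrable (fun x => 2 * (p m x * goo x) - goo x ^ 2) μoo :=
          (e2.const_mul 2).sub e3
        rw [hpt, integral_add e1 e4, integral_sub (e2.const_mul 2) e3,
          integral_const_mul]
      simp_rw [hid]
      have h2 : Tendsto (fun m => ∫ x, p m x * goo x ∂μoo) atTop
          (nhds (∫ x, goo x ^ 2 ∂μoo)) := by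
        rw [← hgg]; exact aux_key Mp Mgoo Mgoo h0
      have := h0.add ((h2.const_mul 2).sub
        (tendsto_const_nhds (x := ∫ x, goo x ^ 2 ∂μoo)))
      have heq : (0 : ℝ) + (2 * (∫ x, goo x ^ 2 ∂μoo) - ∫ x, goo x ^ 2 ∂μoo)
          = ∫ x, goo x ^ 2 ∂μoo := by ring
      rwa [heq] at this
    exact aux_squeeze hab (fun m => (hfstrong m).2) (fun m => (hFstrong m).2)
      (hsqlim foo Mfoo hfoo) (hsqlim Foo MFoo hFoo)
end

section
/- Every function of bounded variation f : ℝ → ℝ admits pointwise approximation by continuous bounded minorants and majorants: there exist sequences (f_m^min), (f_m^maj) ⊂ C_b(ℝ) with -‖f‖_∞ ≤ f_m^min(x) ≤ f(x) ≤ f_m^maj(x) ≤ ‖f‖_∞ for all m and x, and lim_m f_m^min(x) = f(x) = lim_m f_m^maj(x) at every point x where f is continuous; explicitly one may take f_m^min = Σ_{α∈(1/m)ℤ} (inf_{[α-1/m, α+1/m]} f) χ_{1/m}^α and f_m^maj = Σ_{α∈(1/m)ℤ} (sup_{[α-1/m, α+1/m]} f) χ_{1/m}^α using one-dimensional tent functions.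 -/
open Filter

/-- The one-dimensional tent profile `t ↦ max(0, 1 - |t|)`. -/
noncomputable def tent1 (t : ℝ) : ℝ := max 0 (1 - |t|)

/-- The explicit continuous minorant
`f_m^min = Σ_{α ∈ (1/m)ℤ} (inf_{[α-1/m, α+1/m]} f) χ_{1/m}^α`,
where `χ_{1/m}^α(x) = max(0, 1 - |m x - α|)` and the grid size is `1/(m+1)`. -/
noncomputable def fminApprox (f : ℝ → ℝ) (m : ℕ) (x : ℝ) : ℝ :=
  ∑' α : ℤ,
    sInf (f '' Set.Icc ((α : ℝ) / ((m : ℝ) + 1) - 1 / ((m : ℝ) + 1))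
      ((α : ℝ) / ((m : ℝ) + 1) + 1 / ((m : ℝ) + 1))) *
    tent1 (((m : ℝ) + 1) * x - (α : ℝ))

/-- The explicit continuous majorant
`f_m^maj = Σ_{α ∈ (1/m)ℤ} (sup_{[α-1/m, α+1/m]} f) χ_{1/m}^α`. -/
noncomputable def fmajApprox (f : ℝ → ℝ) (m : ℕ) (x : ℝ) : ℝ :=
  ∑' α : ℤ,
    sSup (f '' Set.Icc ((α : ℝ) / ((m : ℝ) + 1) - 1 / ((m : ℝ) + 1))
      ((α : ℝ) / ((m : ℝ) + 1) + 1 / ((m : ℝ) + 1))) *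
    tent1 (((m : ℝ) + 1) * x - (α : ℝ))

lemma tent1_of_one_le {t : ℝ} (h : 1 ≤ |t|) : tent1 t = 0 :=
  max_eq_left (by linarith)

lemma tent1_of_le_one {t : ℝ} (h : |t| ≤ 1) : tent1 t = 1 - |t| :=
  max_eq_right (by linarith)

lemma continuous_tent1 : Continuous tent1 :=
  continuous_const.max (continuous_const.sub continuous_abs)

lemma tsum_tent (c : ℤ → ℝ) (y : ℝ) (n : ℤ) (hy1 : (n:ℝ) - 1 < y) (hy2 : y < (n:ℝ) + 1) :
    ∑' α : ℤ, c α * tent1 (y - α) =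
      c (n-1) * tent1 (y - ((n:ℝ)-1)) + c n * tent1 (y - n) + c (n+1) * tent1 (y - ((n:ℝ)+1)) := by
  have hz2 : ∀ α : ℤ, α ∉ ({n-1, n, n+1} : Finset ℤ) → c α * tent1 (y - α) = 0 := by
    intro α hα
    simp only [Finset.mem_insert, Finset.mem_singleton] at hα
    push_neg at hα
    have h2 : α ≤ n - 2 ∨ n + 2 ≤ α := by omega
    have habs : 1 ≤ |y - (α:ℝ)| := by
      rcases h2 with h | h
      · have : (α:ℝ) ≤ (n:ℝ) - 2 := by exact_mod_cast h
        rw [le_abs]; left; linarith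
      · have : (n:ℝ) + 2 ≤ (α:ℝ) := by exact_mod_cast h
        rw [le_abs]; right; linarith
    rw [tent1_of_one_le habs, mul_zero]
  rw [tsum_eq_sum hz2]
  rw [Finset.sum_insert (by simp; omega), Finset.sum_insert (by simp), Finset.sum_singleton]
  push_cast
  ring

lemma tsum_tent_eval (c : ℤ → ℝ) (y : ℝ) :
    ∑' α : ℤ, c α * tent1 (y - α)
      = c ⌊y⌋ * (1 - Int.fract y) + c (⌊y⌋ + 1) * Int.fract y := by
  have h1 : (⌊y⌋ : ℝ) ≤ y := Int.floor_le y
  have h2 : y < (⌊y⌋ : ℝ) + 1 := Int.lt_floor_add_one y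
  rw [tsum_tent c y ⌊y⌋ (by linarith) h2]
  have t0 : tent1 (y - ((⌊y⌋:ℝ) - 1)) = 0 :=
    tent1_of_one_le (by rw [le_abs]; left; linarith)
  have ha : |y - (⌊y⌋:ℝ)| = y - ⌊y⌋ := abs_of_nonneg (by linarith)
  have t1 : tent1 (y - (⌊y⌋:ℝ)) = 1 - (y - ⌊y⌋) := by
    rw [tent1_of_le_one (by rw [ha]; linarith), ha]
  have hb : |y - ((⌊y⌋:ℝ) + 1)| = (⌊y⌋:ℝ) + 1 - y := by
    rw [abs_of_nonpos (by linarith)]; ring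
  have t2 : tent1 (y - ((⌊y⌋:ℝ) + 1)) = y - ⌊y⌋ := by
    rw [tent1_of_le_one (by rw [hb]; linarith), hb]; ring
  rw [t0, t1, t2, Int.fract]
  ring

-- helper: interval membership from |p*x - α| ≤ 1
lemma mem_grid {p x α : ℝ} (hp : 0 < p) (h : |p * x - α| ≤ 1) :
    x ∈ Set.Icc (α / p - 1 / p) (α / p + 1 / p) := by
  rw [abs_le] at h
  constructor
  · rw [show α / p - 1 / p = (α - 1) / p by ring, div_le_iff₀ hp]
    nlinarith
  · rw [show α / p + 1 / p = (α + 1) / p by ring, le_div_iff₀ hp]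
    nlinarith

lemma close_grid {p x x' α : ℝ} (hp : 0 < p) (hx : |p * x - α| ≤ 1)
    (hx' : x' ∈ Set.Icc (α / p - 1 / p) (α / p + 1 / p)) : |x' - x| ≤ 2 / p := by
  obtain ⟨h1, h2⟩ := hx'
  rw [abs_le] at hx
  have hxl : (α - 1) / p ≤ x := by rw [div_le_iff₀ hp]; nlinarith
  have hxu : x ≤ (α + 1) / p := by rw [le_div_iff₀ hp]; nlinarith
  have e1 : α / p - 1 / p = (α - 1) / p := by ring
  have e2 : α / p + 1 / p = (α + 1) / p := by ring
  have e3 : (α + 1) / p - (α - 1) / p = 2 / p := by ring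
  rw [abs_le]; constructor <;> linarith

/-- Every function of bounded variation `f : ℝ → ℝ` (bounded by `M`) admits the
explicit continuous bounded minorants and majorants `f_m^min ≤ f ≤ f_m^maj` built
from one-dimensional tent functions, converging to `f` at every continuity point. -/
theorem stmt18 (f : ℝ → ℝ) (hBV : BoundedVariationOn f Set.univ)
    (M : ℝ) (hM : ∀ x, |f x| ≤ M) :
    (∀ m, Continuous (fminApprox f m) ∧ Continuous (fmajApprox f m)) ∧
    (∀ m x, -M ≤ fminApprox f m x ∧ fminApprox f m x ≤ f x ∧
      f x ≤ fmajApprox f m x ∧ fmajApprox f m x ≤ M) ∧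
    (∀ x, ContinuousAt f x →
      Tendsto (fun m => fminApprox f m x) atTop (nhds (f x)) ∧
      Tendsto (fun m => fmajApprox f m x) atTop (nhds (f x))) := by
  -- notation
  set cMin : ℕ → ℤ → ℝ := fun m α =>
    sInf (f '' Set.Icc ((α : ℝ) / ((m : ℝ) + 1) - 1 / ((m : ℝ) + 1))
      ((α : ℝ) / ((m : ℝ) + 1) + 1 / ((m : ℝ) + 1))) with hcMin
  set cMaj : ℕ → ℤ → ℝ := fun m α =>
    sSup (f '' Set.Icc ((α : ℝ) / ((m : ℝ) + 1) - 1 / ((m : ℝ) + 1))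
      ((α : ℝ) / ((m : ℝ) + 1) + 1 / ((m : ℝ) + 1))) with hcMaj
  have hp : ∀ m : ℕ, (0:ℝ) < (m:ℝ) + 1 := fun m => by positivity
  have hIcc : ∀ (m : ℕ) (α : ℤ),
      (Set.Icc ((α : ℝ) / ((m : ℝ) + 1) - 1 / ((m : ℝ) + 1))
        ((α : ℝ) / ((m : ℝ) + 1) + 1 / ((m : ℝ) + 1))).Nonempty := by
    intro m α
    apply Set.nonempty_Icc.2
    have : (0:ℝ) < 1 / ((m:ℝ) + 1) := by positivity
    linarith
  have hne : ∀ (m : ℕ) (α : ℤ),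
      (f '' Set.Icc ((α : ℝ) / ((m : ℝ) + 1) - 1 / ((m : ℝ) + 1))
        ((α : ℝ) / ((m : ℝ) + 1) + 1 / ((m : ℝ) + 1))).Nonempty :=
    fun m α => (hIcc m α).image f
  have hbdd : ∀ (m : ℕ) (α : ℤ) (b : ℝ),
      b ∈ f '' Set.Icc ((α : ℝ) / ((m : ℝ) + 1) - 1 / ((m : ℝ) + 1))
        ((α : ℝ) / ((m : ℝ) + 1) + 1 / ((m : ℝ) + 1)) → -M ≤ b ∧ b ≤ M := by
    rintro m α b ⟨x', -, rfl⟩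
    exact abs_le.1 (hM x')
  have hbddBelow : ∀ (m : ℕ) (α : ℤ), BddBelow (f '' Set.Icc ((α : ℝ) / ((m : ℝ) + 1) - 1 / ((m : ℝ) + 1))
        ((α : ℝ) / ((m : ℝ) + 1) + 1 / ((m : ℝ) + 1))) :=
    fun m α => ⟨-M, fun b hb => (hbdd m α b hb).1⟩
  have hbddAbove : ∀ (m : ℕ) (α : ℤ), BddAbove (f '' Set.Icc ((α : ℝ) / ((m : ℝ) + 1) - 1 / ((m : ℝ) + 1))
        ((α : ℝ) / ((m : ℝ) + 1) + 1 / ((m : ℝ) + 1))) :=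
    fun m α => ⟨M, fun b hb => (hbdd m α b hb).2⟩
  -- closed form
  have hfmin : ∀ m x, fminApprox f m x =
      cMin m ⌊((m:ℝ)+1)*x⌋ * (1 - Int.fract (((m:ℝ)+1)*x))
        + cMin m (⌊((m:ℝ)+1)*x⌋ + 1) * Int.fract (((m:ℝ)+1)*x) := by
    intro m x
    exact tsum_tent_eval (cMin m) (((m:ℝ)+1)*x)
  have hfmaj : ∀ m x, fmajApprox f m x =
      cMaj m ⌊((m:ℝ)+1)*x⌋ * (1 - Int.fract (((m:ℝ)+1)*x))
        + cMaj m (⌊((m:ℝ)+1)*x⌋ + 1) * Int.fract (((m:ℝ)+1)*x) := by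
    intro m x
    exact tsum_tent_eval (cMaj m) (((m:ℝ)+1)*x)
  -- grid membership for n = ⌊y⌋ and n+1
  have hmemn : ∀ (m : ℕ) (x : ℝ), |((m:ℝ)+1)*x - (⌊((m:ℝ)+1)*x⌋ : ℝ)| ≤ 1 := by
    intro m x
    have h1 := Int.floor_le (((m:ℝ)+1)*x)
    have h2 := Int.lt_floor_add_one (((m:ℝ)+1)*x)
    rw [abs_le]; constructor <;> linarith
  have hmemn1 : ∀ (m : ℕ) (x : ℝ), |((m:ℝ)+1)*x - ((⌊((m:ℝ)+1)*x⌋ : ℝ) + 1)| ≤ 1 := by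
    intro m x
    have h1 := Int.floor_le (((m:ℝ)+1)*x)
    have h2 := Int.lt_floor_add_one (((m:ℝ)+1)*x)
    rw [abs_le]; constructor <;> linarith
  have hxmem : ∀ (m : ℕ) (x : ℝ) (α : ℤ), |((m:ℝ)+1)*x - (α:ℝ)| ≤ 1 →
      x ∈ Set.Icc ((α : ℝ) / ((m : ℝ) + 1) - 1 / ((m : ℝ) + 1))
        ((α : ℝ) / ((m : ℝ) + 1) + 1 / ((m : ℝ) + 1)) :=
    fun m x α h => mem_grid (hp m) h
  -- pointwise bounds
  have hbounds : ∀ m x, -M ≤ fminApprox f m x ∧ fminApprox f m x ≤ f x ∧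
      f x ≤ fmajApprox f m x ∧ fmajApprox f m x ≤ M := by
    intro m x
    set y := ((m:ℝ)+1)*x with hy
    set n := ⌊y⌋ with hn
    have ht0 : 0 ≤ Int.fract y := Int.fract_nonneg y
    have ht1 : Int.fract y ≤ 1 := le_of_lt (Int.fract_lt_one y)
    have hminn : -M ≤ cMin m n := le_csInf (hne m n) (fun b hb => (hbdd m n b hb).1)
    have hminn1 : -M ≤ cMin m (n+1) := le_csInf (hne m (n+1)) (fun b hb => (hbdd m (n+1) b hb).1)
    have h2' : |y - (((n+1 : ℤ)):ℝ)| ≤ 1 := by push_cast; exact hmemn1 m x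
    have hminfn : cMin m n ≤ f x :=
      csInf_le (hbddBelow m n) (Set.mem_image_of_mem f (hxmem m x n (hmemn m x)))
    have hminfn1 : cMin m (n+1) ≤ f x :=
      csInf_le (hbddBelow m (n+1)) (Set.mem_image_of_mem f (hxmem m x (n+1) h2'))
    have hmajn : cMaj m n ≤ M := csSup_le (hne m n) (fun b hb => (hbdd m n b hb).2)
    have hmajn1 : cMaj m (n+1) ≤ M := csSup_le (hne m (n+1)) (fun b hb => (hbdd m (n+1) b hb).2)
    have hmajfn : f x ≤ cMaj m n :=
      le_csSup (hbddAbove m n) (Set.mem_image_of_mem f (hxmem m x n (hmemn m x)))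
    have hmajfn1 : f x ≤ cMaj m (n+1) :=
      le_csSup (hbddAbove m (n+1)) (Set.mem_image_of_mem f (hxmem m x (n+1) h2'))
    rw [hfmin m x, hfmaj m x]
    refine ⟨by nlinarith, by nlinarith, by nlinarith, by nlinarith⟩
  -- continuity
  have hcont : ∀ (c : ℤ → ℝ) (m : ℕ),
      Continuous (fun x => ∑' α : ℤ, c α * tent1 (((m:ℝ)+1)*x - (α:ℝ))) := by
    intro c m
    rw [continuous_iff_continuousAt]
    intro x0
    set n := ⌊((m:ℝ)+1)*x0⌋ with hn
    have hg : Continuous (fun x : ℝ =>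
        c (n-1) * tent1 (((m:ℝ)+1)*x - ((n:ℝ)-1)) + c n * tent1 (((m:ℝ)+1)*x - (n:ℝ))
          + c (n+1) * tent1 (((m:ℝ)+1)*x - ((n:ℝ)+1))) := by
      have hlin : ∀ b : ℝ, Continuous (fun x : ℝ => ((m:ℝ)+1)*x - b) :=
        fun b => (continuous_const.mul continuous_id).sub continuous_const
      exact ((continuous_const.mul (continuous_tent1.comp (hlin _))).add
        (continuous_const.mul (continuous_tent1.comp (hlin _)))).add
        (continuous_const.mul (continuous_tent1.comp (hlin _)))
    apply hg.continuousAt.congr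
    have hopen : IsOpen {x : ℝ | ((m:ℝ)+1)*x ∈ Set.Ioo ((n:ℝ)-1) ((n:ℝ)+1)} :=
      isOpen_Ioo.preimage (continuous_const.mul continuous_id)
    have hx0 : x0 ∈ {x : ℝ | ((m:ℝ)+1)*x ∈ Set.Ioo ((n:ℝ)-1) ((n:ℝ)+1)} := by
      constructor
      · have := Int.floor_le (((m:ℝ)+1)*x0); linarith
      · exact Int.lt_floor_add_one _
    filter_upwards [hopen.mem_nhds hx0] with x hx
    exact (tsum_tent c (((m:ℝ)+1)*x) n hx.1 hx.2).symm
  -- convergence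
  have hconv : ∀ x, ContinuousAt f x →
      Tendsto (fun m => fminApprox f m x) atTop (nhds (f x)) ∧
      Tendsto (fun m => fmajApprox f m x) atTop (nhds (f x)) := by
    intro x hfx
    have key : ∀ ε > (0:ℝ), ∃ N : ℕ, ∀ m ≥ N,
        |fminApprox f m x - f x| < ε ∧ |fmajApprox f m x - f x| < ε := by
      intro ε hε
      obtain ⟨δ, hδ, hδ2⟩ := Metric.continuousAt_iff.1 hfx (ε/2) (by linarith)
      obtain ⟨N, hN⟩ := exists_nat_gt (2/δ)
      refine ⟨N, fun m hm => ?_⟩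
      have hmδ : 2 / ((m:ℝ)+1) < δ := by
        have h1 : 2/δ < (m:ℝ) + 1 := by
          have : (N:ℝ) ≤ (m:ℝ) := by exact_mod_cast hm
          linarith
        rw [div_lt_iff₀ (hp m)]
        have := (div_lt_iff₀ hδ).1 h1
        linarith
      set y := ((m:ℝ)+1)*x with hy
      set n := ⌊y⌋ with hn
      -- for α ∈ {n, n+1}: all values on the grid interval are ε/2-close to f x
      have hclose : ∀ α : ℤ, |y - (α:ℝ)| ≤ 1 → ∀ b ∈ f '' Set.Icc
          ((α : ℝ) / ((m : ℝ) + 1) - 1 / ((m : ℝ) + 1))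
          ((α : ℝ) / ((m : ℝ) + 1) + 1 / ((m : ℝ) + 1)), |b - f x| < ε/2 := by
        rintro α hα b ⟨x', hx', rfl⟩
        have := close_grid (hp m) hα hx'
        have hd : dist x' x < δ := by
          rw [Real.dist_eq]
          linarith
        have := hδ2 hd
        rwa [Real.dist_eq] at this
      have hlow : ∀ α : ℤ, |y - (α:ℝ)| ≤ 1 → f x - ε/2 ≤ cMin m α := by
        intro α hα
        apply le_csInf (hne m α)
        intro b hb
        have := hclose α hα b hb
        rw [abs_lt] at this
        linarith [this.1]
      have hhigh : ∀ α : ℤ, |y - (α:ℝ)| ≤ 1 → cMaj m α ≤ f x + ε/2 := by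
        intro α hα
        apply csSup_le (hne m α)
        intro b hb
        have := hclose α hα b hb
        rw [abs_lt] at this
        linarith [this.2]
      have h1 : |y - (n:ℝ)| ≤ 1 := hmemn m x
      have h2 : |y - ((n:ℝ)+1)| ≤ 1 := hmemn1 m x
      have h2' : |y - (((n+1 : ℤ)):ℝ)| ≤ 1 := by push_cast; exact h2
      have hlown := hlow n h1
      have hlown1 := hlow (n+1) h2'
      have hhighn := hhigh n h1
      have hhighn1 := hhigh (n+1) h2'
      have hb := hbounds m x
      have ht0 : 0 ≤ Int.fract y := Int.fract_nonneg y
      have ht1 : Int.fract y ≤ 1 := le_of_lt (Int.fract_lt_one y)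
      constructor
      · rw [hfmin m x, abs_lt]
        rw [hfmin m x] at hb
        constructor
        · nlinarith [hb.1]
        · nlinarith [hb.2.1]
      · rw [hfmaj m x, abs_lt]
        rw [hfmaj m x] at hb
        constructor
        · nlinarith [hb.2.2.1]
        · nlinarith [hb.2.2.2]
    constructor
    · rw [Metric.tendsto_atTop]
      intro ε hε
      obtain ⟨N, hN⟩ := key ε hε
      exact ⟨N, fun m hm => by rw [Real.dist_eq]; exact (hN m hm).1⟩
    · rw [Metric.tendsto_atTop]
      intro ε hε
      obtain ⟨N, hN⟩ := key ε hε
      exact ⟨N, fun m hm => by rw [Real.dist_eq]; exact (hN m hm).2⟩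
  exact ⟨fun m => ⟨hcont (cMin m) m, hcont (cMaj m) m⟩, hbounds, hconv⟩
end

section
/- Let λ be a finite measure on Ω, E = L²(Ω,λ), and f : ℝ → ℝ bounded and measurable with set of discontinuities U_f at most countable. Suppose μ̃ is a probability measure on E such that λ({ω : h(ω) = a}) = 0 for μ̃-a.e. h ∈ E and every a ∈ U_f. If (f_m) ⊂ C_b(ℝ) is uniformly bounded and converges pointwise to f on ℝ \ U_f, then Q_{f_m}(h) := ∫_Ω f_m(h(ω)) dλ(ω) converges to Q_f(h) for μ̃-a.e. h, and exp(-Q_{f_m}) → exp(-Q_f) strongly in L²(E, μ̃). -/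
open MeasureTheory Filter

set_option synthInstance.maxHeartbeats 1000000 in
private lemma contQ {Ω : Type*} [MeasurableSpace Ω] (lam : Measure Ω)
    [IsFiniteMeasure lam] (g : ℝ → ℝ) (hg : Continuous g) (C : ℝ)
    (hgb : ∀ x, |g x| ≤ C) :
    Continuous (fun h : Lp ℝ 2 lam => ∫ ω, g (h ω) ∂lam) := by
  rw [continuous_iff_seqContinuous]
  intro hn h hcon
  -- convergence in eLpNorm
  have h2 : Tendsto (fun n => eLpNorm ((hn n : Ω → ℝ) - (h : Ω → ℝ)) 2 lam) atTop (nhds 0) := by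
    have := tendsto_iff_edist_tendsto_0.1 hcon
    simpa [Lp.edist_def] using this
  have htim : TendstoInMeasure lam (fun n => ((hn n : Ω → ℝ))) atTop (h : Ω → ℝ) :=
    tendstoInMeasure_of_tendsto_eLpNorm_of_ne_top (by norm_num) (by norm_num)
      (fun n => (Lp.aestronglyMeasurable (hn n))) (Lp.aestronglyMeasurable h) h2
  apply tendsto_of_subseq_tendsto
  intro ns hns
  have htim' : TendstoInMeasure lam (fun n => ((hn (ns n) : Ω → ℝ))) atTop (h : Ω → ℝ) :=
    fun ε hε => (htim ε hε).comp hns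
  obtain ⟨ms, -, hae⟩ := htim'.exists_seq_tendsto_ae
  refine ⟨ms, ?_⟩
  have hint : Integrable (fun _ : Ω => C) lam := integrable_const C
  refine tendsto_integral_of_dominated_convergence (fun _ => C)
    (fun n => (hg.comp_aestronglyMeasurable (Lp.aestronglyMeasurable _))) hint
    (fun n => ae_of_all _ fun ω => by simpa [Real.norm_eq_abs] using hgb _) ?_
  filter_upwards [hae] with ω hω
  exact ((hg.tendsto _).comp hω)

/-- Let `λ` be a finite measure on `Ω`, `E = L²(Ω,λ)`, and `f : ℝ → ℝ` bounded
measurable with at most countably many discontinuities `U_f`. If `μ̃` is a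
probability measure on `E` such that for every `a ∈ U_f` the level set `{h = a}`
is `λ`-negligible for `μ̃`-a.e. `h`, and `(f_m) ⊂ C_b(ℝ)` is uniformly bounded and
converges pointwise to `f` off `U_f`, then `Q_{f_m}(h) → Q_f(h)` for `μ̃`-a.e. `h`,
and `exp(-Q_{f_m}) → exp(-Q_f)` strongly in `L²(E, μ̃)`, where
`Q_g(h) = ∫_Ω g(h(ω)) dλ(ω)`. -/
theorem stmt19 {Ω : Type*} [MeasurableSpace Ω] (lam : Measure Ω)
    [IsFiniteMeasure lam]
    [MeasurableSpace (Lp ℝ 2 lam)] [BorelSpace (Lp ℝ 2 lam)]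
    (μ : Measure (Lp ℝ 2 lam)) [IsProbabilityMeasure μ]
    (f : ℝ → ℝ) (hfm : Measurable f) (M : ℝ) (hfb : ∀ x, |f x| ≤ M)
    (hcount : {x : ℝ | ¬ ContinuousAt f x}.Countable)
    (hlvl : ∀ a ∈ {x : ℝ | ¬ ContinuousAt f x},
      ∀ᵐ h ∂μ, lam {ω | h ω = a} = 0)
    (fm : ℕ → ℝ → ℝ) (hfmc : ∀ m, Continuous (fm m))
    (hfmb : ∃ C, ∀ m x, |fm m x| ≤ C)
    (hfmp : ∀ x ∉ {x : ℝ | ¬ ContinuousAt f x},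
      Tendsto (fun m => fm m x) atTop (nhds (f x))) :
    (∀ᵐ h ∂μ, Tendsto (fun m => ∫ ω, fm m (h ω) ∂lam) atTop
      (nhds (∫ ω, f (h ω) ∂lam))) ∧
    Tendsto (fun m => ∫ h,
        (Real.exp (-(∫ ω, fm m (h ω) ∂lam)) -
          Real.exp (-(∫ ω, f (h ω) ∂lam))) ^ 2 ∂μ)
      atTop (nhds 0) := by
  obtain ⟨C, hC⟩ := hfmb
  set U := {x : ℝ | ¬ ContinuousAt f x} with hU
  -- Part 1
  have hae : ∀ᵐ h ∂μ, ∀ a ∈ U, lam {ω | h ω = a} = 0 :=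
    (ae_ball_iff hcount).2 hlvl
  have part1 : ∀ᵐ h ∂μ, Tendsto (fun m => ∫ ω, fm m (h ω) ∂lam) atTop
      (nhds (∫ ω, f (h ω) ∂lam)) := by
    filter_upwards [hae] with h hh
    have hnull : lam {ω | h ω ∈ U} = 0 := by
      have : {ω | h ω ∈ U} = ⋃ a ∈ U, {ω | h ω = a} := by
        ext ω; simp [Set.mem_iUnion]
      rw [this]
      exact (measure_biUnion_null_iff hcount).2 hh
    refine tendsto_integral_of_dominated_convergence (fun _ => C)
      (fun m => ((hfmc m).comp_aestronglyMeasurable (Lp.aestronglyMeasurable h)))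
      (integrable_const C)
      (fun m => ae_of_all _ fun ω => by simpa [Real.norm_eq_abs] using hC m _) ?_
    have : ∀ᵐ ω ∂lam, h ω ∉ U := by
      rw [ae_iff]; simpa using hnull
    filter_upwards [this] with ω hω
    exact hfmp _ hω
  refine ⟨part1, ?_⟩
  -- Part 2
  set Qm : ℕ → Lp ℝ 2 lam → ℝ := fun m h => ∫ ω, fm m (h ω) ∂lam with hQm
  set Q : Lp ℝ 2 lam → ℝ := fun h => ∫ ω, f (h ω) ∂lam with hQ
  have hQmc : ∀ m, Continuous (Qm m) := fun m => contQ lam (fm m) (hfmc m) C (hC m)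
  have hQmeas : AEStronglyMeasurable Q μ :=
    aestronglyMeasurable_of_tendsto_ae atTop
      (fun m => (hQmc m).aestronglyMeasurable) part1
  -- uniform bounds on Qm and Q
  set L : ℝ := (lam Set.univ).toReal with hL
  have hQmb : ∀ m h, |Qm m h| ≤ |C| * L := by
    intro m h
    calc |Qm m h| ≤ ∫ ω, |fm m (h ω)| ∂lam := by
          simpa [Real.norm_eq_abs] using norm_integral_le_integral_norm (fun ω => fm m (h ω))
      _ ≤ ∫ _ω, |C| ∂lam := by
          refine integral_mono_of_nonneg (ae_of_all _ fun ω => abs_nonneg _)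
            (integrable_const _) (ae_of_all _ fun ω => (hC m _).trans (le_abs_self C))
      _ = |C| * L := by simp [hL, mul_comm, Measure.real]
  have hQb : ∀ h, |Q h| ≤ |M| * L := by
    intro h
    calc |Q h| ≤ ∫ ω, |f (h ω)| ∂lam := by
          simpa [Real.norm_eq_abs] using norm_integral_le_integral_norm (fun ω => f (h ω))
      _ ≤ ∫ _ω, |M| ∂lam := by
          refine integral_mono_of_nonneg (ae_of_all _ fun ω => abs_nonneg _)
            (integrable_const _) ?_
          · refine ae_of_all _ fun ω => ?_
            · have := (hfm.comp (Lp.stronglyMeasurable h).measurable)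
              exact (hfb _).trans (le_abs_self M)
      _ = |M| * L := by simp [hL, mul_comm, Measure.real]
  -- but Q∘h integrand may not be integrable... it's fine: bound relies on ∫|f∘h| ≤ ∫|M|
  -- requires |f∘h| integrable; it is, since bounded measurable on finite measure
  set K : ℝ := Real.exp (|C| * L) + Real.exp (|M| * L) with hK
  have hbound : ∀ m h, ‖(Real.exp (-(Qm m h)) - Real.exp (-(Q h))) ^ 2‖ ≤ K ^ 2 := by
    intro m h
    have h1 : Real.exp (-(Qm m h)) ≤ Real.exp (|C| * L) :=
      Real.exp_le_exp.2 ((neg_le_abs _).trans (abs_neg (Qm m h) ▸ hQmb m h))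
    have h2 : Real.exp (-(Q h)) ≤ Real.exp (|M| * L) :=
      Real.exp_le_exp.2 ((neg_le_abs _).trans (abs_neg (Q h) ▸ hQb h))
    have habs : |Real.exp (-(Qm m h)) - Real.exp (-(Q h))| ≤ K := by
      rw [abs_sub_le_iff]
      constructor
      · have := (Real.exp_pos (-(Q h))).le
        nlinarith [Real.exp_pos (-(Q h)), Real.exp_pos (|M| * L)]
      · nlinarith [Real.exp_pos (-(Qm m h)), Real.exp_pos (|C| * L)]
    rw [abs_le] at habs
    have hsq : (Real.exp (-(Qm m h)) - Real.exp (-(Q h))) ^ 2 ≤ K ^ 2 :=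
      sq_le_sq' habs.1 habs.2
    have hnn : (0:ℝ) ≤ (Real.exp (-(Qm m h)) - Real.exp (-(Q h))) ^ 2 := sq_nonneg _
    simpa [Real.norm_eq_abs, abs_of_nonneg hnn] using hsq
  have hmeas : ∀ m, AEStronglyMeasurable
      (fun h => (Real.exp (-(Qm m h)) - Real.exp (-(Q h))) ^ 2) μ := by
    intro m
    exact (((Real.continuous_exp.comp continuous_neg).comp (hQmc m)).aestronglyMeasurable.sub
      ((Real.continuous_exp.aestronglyMeasurable.comp_aemeasurable)
        (hQmeas.aemeasurable.neg))).pow 2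
  have hlim : ∀ᵐ h ∂μ, Tendsto
      (fun m => (Real.exp (-(Qm m h)) - Real.exp (-(Q h))) ^ 2) atTop (nhds 0) := by
    filter_upwards [part1] with h hh
    have : Tendsto (fun m => Real.exp (-(Qm m h)) - Real.exp (-(Q h))) atTop (nhds 0) := by
      have := ((Real.continuous_exp.tendsto _).comp (hh.neg)).sub_const (Real.exp (-(Q h)))
      simpa [hQm, hQ] using this
    simpa using (this.pow 2)
  have := tendsto_integral_of_dominated_convergence (μ := μ)
    (F := fun m h => (Real.exp (-(Qm m h)) - Real.exp (-(Q h))) ^ 2)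
    (f := fun _ => (0 : ℝ)) (fun _ => K ^ 2) hmeas (integrable_const _)
    (fun m => ae_of_all _ (hbound m)) hlim
  simpa using this
end
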